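/- arXiv:2404.00625 — 10 statements merged into one kernel-verified Lean document; each statement's English description precedes it below -/
import Mathlib

section
/- Let L be a real n × n matrix with nonpositive off-diagonal entries and zero row sums, and let μ > 0 satisfy L_{ii} ≤ μ for every i. Then every nonzero complex eigenvalue λ of L satisfies Re λ > 0 and (Im λ)² ≤ 2μ·Re λ; equivalently, (Im λ)²/Re λ ≤ 2μ. -/
theorem laplacian_eig_im_sq_bound (n : ℕ) (L : Matrix (Fin n) (Fin n) ℝ)
    (hoff : ∀ i j, i ≠ j → L i j ≤ 0)
    (hrow : ∀ i, ∑ j, L i j = 0)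
    (μ : ℝ) (hμ : 0 < μ) (hdiag : ∀ i, L i i ≤ μ) :
    ∀ lam : ℂ, lam ∈ spectrum ℂ (L.map (Complex.ofReal)) → lam ≠ 0 →
      0 < lam.re ∧ lam.im ^ 2 ≤ 2 * μ * lam.re ∧ lam.im ^ 2 / lam.re ≤ 2 * μ := by
  intro lam hmem hne
  -- turn spectrum membership into an eigenvalue of toLin'
  have heig : Module.End.HasEigenvalue (Matrix.toLin' (L.map (Complex.ofReal))) lam := by
    rw [show Matrix.toLin' (L.map Complex.ofReal) =
        Matrix.toLinAlgEquiv (Pi.basisFun ℂ (Fin n)) (L.map Complex.ofReal) from rfl,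
      Module.End.hasEigenvalue_iff_mem_spectrum, AlgEquiv.spectrum_eq]
    exact hmem
  obtain ⟨k, hk⟩ := eigenvalue_mem_ball heig
  -- compute the radius
  have hrad : ∑ j ∈ Finset.univ.erase k, ‖(L.map (Complex.ofReal)) k j‖ = L k k := by
    have : ∀ j ∈ Finset.univ.erase k, ‖(L.map (Complex.ofReal)) k j‖ = -(L k j) := by
      intro j hj
      have hjk : j ≠ k := Finset.ne_of_mem_erase hj
      simp only [Matrix.map_apply, Complex.norm_real, Real.norm_eq_abs]
      exact abs_of_nonpos (hoff k j (Ne.symm hjk))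
    rw [Finset.sum_congr rfl this, Finset.sum_neg_distrib]
    have := hrow k
    have hsplit : ∑ j, L k j = L k k + ∑ j ∈ Finset.univ.erase k, L k j := by
      rw [← Finset.add_sum_erase _ _ (Finset.mem_univ k)]
    linarith [hsplit ▸ this]
  rw [hrad, Metric.mem_closedBall] at hk
  have hdiagk : (L.map (Complex.ofReal)) k k = (L k k : ℂ) := rfl
  rw [hdiagk] at hk
  set d := L k k with hd
  -- translate the disc condition
  have hd0 : 0 ≤ d := by
    rw [← hrad]
    exact Finset.sum_nonneg fun j _ => norm_nonneg _
  have habs : (lam.re - d) ^ 2 + lam.im ^ 2 ≤ d ^ 2 := by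
    have h1 : ‖lam - (d : ℂ)‖ ≤ d := by rwa [Complex.dist_eq] at hk
    have h3 : Complex.normSq (lam - (d : ℂ)) = (lam.re - d) ^ 2 + lam.im ^ 2 := by
      simp [Complex.normSq_apply, Complex.sub_re, Complex.sub_im]
      ring
    nlinarith [norm_nonneg (lam - (d : ℂ)), Complex.sq_norm (lam - (d : ℂ))]
  have hre0 : 0 ≤ lam.re := by nlinarith [sq_nonneg lam.im, sq_nonneg lam.re]
  have him : lam.im ^ 2 ≤ 2 * d * lam.re := by nlinarith [sq_nonneg lam.re]
  have hdμ : d ≤ μ := hdiag k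
  have hre : 0 < lam.re := by
    rcases hre0.lt_or_eq with h | h
    · exact h
    · exfalso
      have him0 : lam.im = 0 := by nlinarith [sq_nonneg lam.im]
      exact hne (Complex.ext (by simpa using h.symm) him0)
  refine ⟨hre, by nlinarith, ?_⟩
  rw [div_le_iff₀ hre]
  nlinarith
end

section
/- Fix real constants ζā + ξā_r = μ > 0 and control gains α > 0, β > 0 with β² > 2αμ. Then for every n and every real n × n matrix L with nonpositive off-diagonal entries, zero row sums, and all diagonal entries at most μ, every nonzero complex eigenvalue λ of L satisfies β²·Re λ > α·(Im λ)². (This is the spectral content of the claim that the absolute velocity protocol achieves completely scalable second-order consensus: the consensus criterion β²/α > max_{λ≠0} (Im λ)²/(Re λ) holds with the same fixed gains for every graph in every mixed graph family satisfying the degree and weight bounds.) -/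
theorem absolute_protocol_scalable_spectral
    (ζ abar ξ abarr μ : ℝ) (hμdef : μ = ζ * abar + ξ * abarr) (hμ : 0 < μ)
    (α β : ℝ) (hα : 0 < α) (hβ : 0 < β) (hgain : β ^ 2 > 2 * α * μ) :
    ∀ (n : ℕ) (L : Matrix (Fin n) (Fin n) ℝ),
      (∀ i j, i ≠ j → L i j ≤ 0) →
      (∀ i, ∑ j, L i j = 0) →
      (∀ i, L i i ≤ μ) →
      ∀ lam : ℂ, lam ∈ spectrum ℂ (L.map (Complex.ofReal)) → lam ≠ 0 →
        β ^ 2 * lam.re > α * lam.im ^ 2 := by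
  intro n L hoff hrow hdiag lam hspec hne
  set A : Matrix (Fin n) (Fin n) ℂ := L.map Complex.ofReal with hA
  -- eigenvalue via Gershgorin
  have hEig : Module.End.HasEigenvalue (Matrix.toLin' A) lam := by
    rw [Module.End.hasEigenvalue_iff_mem_spectrum]
    show lam ∈ spectrum ℂ (Matrix.toLinAlgEquiv' A)
    rwa [AlgEquiv.spectrum_eq]
  obtain ⟨k, hk⟩ := eigenvalue_mem_ball hEig
  rw [Metric.mem_closedBall, dist_eq_norm] at hk
  set d : ℝ := L k k with hd
  -- the radius equals d
  have hAkk : A k k = (d : ℂ) := rfl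
  have hrad : ∑ j ∈ Finset.univ.erase k, ‖A k j‖ = d := by
    have h1 : ∀ j ∈ Finset.univ.erase k, ‖A k j‖ = -(L k j) := by
      intro j hj
      have hjk : j ≠ k := Finset.ne_of_mem_erase hj
      have : L k j ≤ 0 := hoff k j (Ne.symm hjk)
      simp [hA, Matrix.map_apply, Complex.norm_real, abs_of_nonpos this]
    rw [Finset.sum_congr rfl h1, Finset.sum_neg_distrib]
    have h2 : ∑ j ∈ Finset.univ.erase k, L k j = -d := by
      have := Finset.sum_erase_eq_sub (f := fun j => L k j) (Finset.mem_univ k)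
      rw [this, hrow k]; ring
    rw [h2]; ring
  rw [hrad, hAkk] at hk
  -- square the norm bound
  have hsq : (lam.re - d) ^ 2 + lam.im ^ 2 ≤ d ^ 2 := by
    have hnn : (0:ℝ) ≤ d := le_trans (norm_nonneg _) hk
    have := sq_le_sq' (by linarith [norm_nonneg (lam - (d:ℂ))]) hk
    calc (lam.re - d) ^ 2 + lam.im ^ 2 = ‖lam - (d:ℂ)‖ ^ 2 := by
          rw [Complex.sq_norm, Complex.normSq_apply]
          simp [Complex.sub_re, Complex.sub_im]
          ring
      _ ≤ d ^ 2 := this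
  have hdμ : d ≤ μ := hdiag k
  have hd0 : (0:ℝ) ≤ d := le_trans (norm_nonneg _) hk
  have him : lam.im ^ 2 ≤ 2 * d * lam.re - lam.re ^ 2 := by nlinarith [hsq]
  have hre : 0 < lam.re := by
    rcases lt_or_ge 0 lam.re with h | h
    · exact h
    · exfalso
      have h1 : lam.re ^ 2 ≤ 0 := by nlinarith
      have h2 : lam.re = 0 := by nlinarith [sq_nonneg lam.re]
      have h3 : lam.im = 0 := by nlinarith [sq_nonneg lam.im]
      exact hne (Complex.ext h2 h3)
  have : α * lam.im ^ 2 ≤ 2 * α * μ * lam.re := by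
    nlinarith [mul_le_mul_of_nonneg_left him hα.le,
      mul_nonneg (mul_nonneg hα.le (sub_nonneg.mpr hdμ)) hre.le,
      mul_nonneg hα.le (sq_nonneg lam.re)]
  nlinarith [mul_pos (sub_pos.mpr hgain) hre, this]
end

section
/- Let α > 0 and β > 0 be real numbers and μ a complex number with Re μ > 0. Then every complex root s of the quadratic polynomial s² + βs + αμ has Re s < 0 if and only if β²/α > (Im μ)²/(Re μ), i.e., β²·Re μ > α·(Im μ)². -/
theorem absolute_protocol_hurwitz_iff (α β : ℝ) (hα : 0 < α) (hβ : 0 < β)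
    (μ : ℂ) (hμ : 0 < μ.re) :
    (∀ s : ℂ, s ^ 2 + (β : ℂ) * s + (α : ℂ) * μ = 0 → s.re < 0) ↔
      β ^ 2 * μ.re > α * μ.im ^ 2 := by
  constructor
  · intro h
    -- get a square root of the discriminant
    obtain ⟨w, hw⟩ : ∃ w : ℂ, w ^ 2 = (β : ℂ) ^ 2 - 4 * α * μ :=
      IsAlgClosed.exists_pow_nat_eq _ (n := 2) (by norm_num)
    set s1 : ℂ := (-(β : ℂ) + w) / 2 with hs1
    set s2 : ℂ := (-(β : ℂ) - w) / 2 with hs2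
    have r1 : s1 ^ 2 + (β : ℂ) * s1 + (α : ℂ) * μ = 0 := by
      rw [hs1]; linear_combination hw / 4
    have r2 : s2 ^ 2 + (β : ℂ) * s2 + (α : ℂ) * μ = 0 := by
      rw [hs2]; linear_combination hw / 4
    have hx1 := h s1 r1
    have hx2 := h s2 r2
    have hsum : s1 + s2 = -(β : ℂ) := by rw [hs1, hs2]; ring
    have hprod : s1 * s2 = (α : ℂ) * μ := by
      rw [hs1, hs2]; linear_combination -hw / 4
    have h1 : s1.re + s2.re = -β := by
      have := congrArg Complex.re hsum; simpa using this
    have h2 : s1.im + s2.im = 0 := by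
      have := congrArg Complex.im hsum; simpa using this
    have h3 : s1.re * s2.re - s1.im * s2.im = α * μ.re := by
      have := congrArg Complex.re hprod; simpa [Complex.mul_re] using this
    have h4 : s1.re * s2.im + s1.im * s2.re = α * μ.im := by
      have := congrArg Complex.im hprod; simpa [Complex.mul_im] using this
    have key : α * (β ^ 2 * μ.re - α * μ.im ^ 2)
        = s1.re * s2.re * ((s1.re + s2.re) ^ 2 + 4 * s1.im ^ 2) := by
      have hy : s2.im = -s1.im := by linarith
      rw [hy] at h3 h4
      linear_combination ((s1.im ^ 2 + s1.re * s2.re) * (β - s1.re - s2.re)) * h1 - β ^ 2 * h3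
        + (s1.im * (s2.re - s1.re) + α * μ.im) * h4
    have hpos : 0 < s1.re * s2.re * ((s1.re + s2.re) ^ 2 + 4 * s1.im ^ 2) := by
      have hb : (s1.re + s2.re) ^ 2 + 4 * s1.im ^ 2 > 0 := by nlinarith [sq_nonneg s1.im]
      exact mul_pos (mul_pos_of_neg_of_neg hx1 hx2) hb
    nlinarith [key, hpos]
  · intro hcond s hs
    by_contra hx
    push_neg at hx
    set x := s.re with hxdef
    set y := s.im with hydef
    have hre : x ^ 2 - y ^ 2 + β * x + α * μ.re = 0 := by
      have := congrArg Complex.re hs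
      simp [Complex.add_re, Complex.mul_re, pow_two, Complex.mul_im] at this
      linarith [this]
    have him : 2 * x * y + β * y + α * μ.im = 0 := by
      have := congrArg Complex.im hs
      simp [Complex.add_im, Complex.mul_im, pow_two, Complex.mul_re] at this
      linarith [this]
    -- (x² + βx + αRe μ)(2x+β)² = α² (Im μ)², but LHS > α² (Im μ)²
    have hsq : (x ^ 2 + β * x + α * μ.re) * (2 * x + β) ^ 2 = (α * μ.im) ^ 2 := by
      have hy2 : y ^ 2 = x ^ 2 + β * x + α * μ.re := by linarith
      have hyy : y * (2 * x + β) = -(α * μ.im) := by linarith [him]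
      linear_combination -(2 * x + β) ^ 2 * hy2 + (y * (2 * x + β) - α * μ.im) * hyy
    nlinarith [hsq, mul_pos hα hμ, mul_lt_mul_of_pos_left hcond hα,
      mul_nonneg (mul_nonneg hx hx) (sq_nonneg (2 * x + β)),
      mul_nonneg (mul_nonneg hβ.le hx) (sq_nonneg (2 * x + β)),
      mul_nonneg (mul_pos hα hμ).le (by nlinarith [sq_nonneg x, mul_nonneg hx hβ.le] : (0:ℝ) ≤ 4 * x ^ 2 + 4 * x * β)]
end

section
/- Let α > 0 and β > 0 be real numbers and μ a complex number with Re μ > 0. Then every complex root s of the quadratic polynomial s² + βμs + αμ has Re s < 0 if and only if β²/α > (Im μ)²/(Re μ·|μ|²), i.e., β²·Re μ·|μ|² > α·(Im μ)². -/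
lemma quad_root_parts_aux (α β a b p1 p2 q1 q2 : ℝ) (hα : 0 < α) (hβ : 0 < β)
    (ha : 0 < a)
    (e1 : p1 + p2 = -(β * a)) (e2 : q1 + q2 = -(β * b))
    (e3 : p1 * p2 - q1 * q2 = α * a) (e4 : p1 * q2 + p2 * q1 = α * b) :
    (p1 < 0 ∧ p2 < 0) ↔ β ^ 2 * a * (a ^ 2 + b ^ 2) > α * b ^ 2 := by
  have hE : α * (β ^ 2 * a * (a ^ 2 + b ^ 2)) - α ^ 2 * b ^ 2
      = p1 * p2 * ((p1 + p2) ^ 2 + (q1 - q2) ^ 2) := by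
    linear_combination
      (-((β * a) * (α * a) + (β * b) * (α * b) + (-(p1 + p2)) * (α * a))
        - 2 * α * (a * ((p1 + p2) - β * a) + b * (q1 + q2))) * e1 +
      (-((-(p1 + p2)) * (α * b)) + 2 * α * β * a * b) * e2 +
      (-(p1 + p2) ^ 2) * e3 +
      (-((-(p1 + p2)) * (-(q1 + q2)) - (α * b + (p1 * q2 + p2 * q1)))) * e4
  have hsum : p1 + p2 < 0 := by nlinarith
  constructor
  · rintro ⟨h1, h2⟩
    have hp : 0 < p1 * p2 := mul_pos_of_neg_of_neg h1 h2
    nlinarith [sq_nonneg (q1 - q2), mul_pos_of_neg_of_neg hsum hsum]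
  · intro h
    have hE' : 0 < p1 * p2 * ((p1 + p2) ^ 2 + (q1 - q2) ^ 2) := by nlinarith
    have hpos : 0 < (p1 + p2) ^ 2 + (q1 - q2) ^ 2 := by
      nlinarith [sq_nonneg (q1 - q2), mul_pos_of_neg_of_neg hsum hsum]
    have hp : 0 < p1 * p2 := by
      by_contra hc
      push_neg at hc
      nlinarith [mul_nonneg (neg_nonneg.2 hc) hpos.le]
    constructor
    · by_contra hc
      push_neg at hc
      nlinarith
    · by_contra hc
      push_neg at hc
      nlinarith

theorem relative_protocol_hurwitz_iff (α β : ℝ) (hα : 0 < α) (hβ : 0 < β)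
    (μ : ℂ) (hμ : 0 < μ.re) :
    (∀ s : ℂ, s ^ 2 + (β : ℂ) * μ * s + (α : ℂ) * μ = 0 → s.re < 0) ↔
      β ^ 2 * μ.re * ‖μ‖ ^ 2 > α * μ.im ^ 2 := by
  obtain ⟨w, hw⟩ : ∃ w : ℂ, w ^ 2 = (β : ℂ) ^ 2 * μ ^ 2 - 4 * α * μ :=
    ⟨_, Complex.cpow_nat_inv_pow _ two_ne_zero⟩
  set s₁ : ℂ := (-(β : ℂ) * μ + w) / 2 with hs₁
  set s₂ : ℂ := (-(β : ℂ) * μ - w) / 2 with hs₂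
  have hfac : ∀ s : ℂ, s ^ 2 + (β : ℂ) * μ * s + (α : ℂ) * μ = (s - s₁) * (s - s₂) := by
    intro s
    rw [hs₁, hs₂]
    linear_combination ((1 : ℂ) / 4) * hw
  have hr1 : s₁ ^ 2 + (β : ℂ) * μ * s₁ + (α : ℂ) * μ = 0 := by
    rw [hfac s₁]; ring
  have hr2 : s₂ ^ 2 + (β : ℂ) * μ * s₂ + (α : ℂ) * μ = 0 := by
    rw [hfac s₂]; ring
  have hsumc : s₁ + s₂ = -(β : ℂ) * μ := by rw [hs₁, hs₂]; ring
  have hprodc : s₁ * s₂ = (α : ℂ) * μ := by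
    rw [hs₁, hs₂]; linear_combination (-(1 : ℂ) / 4) * hw
  have e1 : s₁.re + s₂.re = -(β * μ.re) := by
    have := congrArg Complex.re hsumc
    simpa using this
  have e2 : s₁.im + s₂.im = -(β * μ.im) := by
    have := congrArg Complex.im hsumc
    simpa using this
  have e3 : s₁.re * s₂.re - s₁.im * s₂.im = α * μ.re := by
    have := congrArg Complex.re hprodc
    simpa [Complex.mul_re] using this
  have e4 : s₁.re * s₂.im + s₂.re * s₁.im = α * μ.im := by
    have := congrArg Complex.im hprodc
    simp [Complex.mul_im] at this
    linarith
  have habs : ‖μ‖ ^ 2 = μ.re ^ 2 + μ.im ^ 2 := by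
    rw [Complex.sq_norm, Complex.normSq_apply]; ring
  rw [habs]
  have key := quad_root_parts_aux α β μ.re μ.im s₁.re s₂.re s₁.im s₂.im hα hβ hμ e1 e2 e3 e4
  constructor
  · intro h
    exact key.mp ⟨h s₁ hr1, h s₂ hr2⟩
  · intro h s hs
    have h0 : (s - s₁) * (s - s₂) = 0 := by rw [← hfac s]; exact hs
    obtain ⟨hp1, hp2⟩ := key.mpr h
    rcases mul_eq_zero.mp h0 with h' | h'
    · rw [sub_eq_zero.mp h']; exact hp1
    · rw [sub_eq_zero.mp h']; exact hp2
end

section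
/- Fix μ > 0 and control gains α > 0, β > 0 with β² > 2αμ. Then for every n and every real n × n matrix L with nonpositive off-diagonal entries, zero row sums, and all diagonal entries at most μ, and for every nonzero complex eigenvalue λ of L, every complex root s of s² + βs + αλ satisfies Re s < 0. -/
-- auxiliary: the root-location argument
lemma aux_root_neg (μ α β : ℝ) (hμ : 0 < μ) (hα : 0 < α) (hβ : 0 < β)
    (hgain : β ^ 2 > 2 * α * μ) (lam : ℂ) (hlre : 0 < lam.re)
    (hkey : lam.im ^ 2 ≤ 2 * μ * lam.re)
    (s : ℂ) (hs : s ^ 2 + (β : ℂ) * s + (α : ℂ) * lam = 0) : s.re < 0 := by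
  set x := s.re with hx
  set y := s.im with hy
  have hreim : x ^ 2 - y ^ 2 + β * x + α * lam.re = 0 ∧
      2 * x * y + β * y + α * lam.im = 0 := by
    rw [Complex.ext_iff] at hs
    obtain ⟨h1, h2⟩ := hs
    simp [Complex.add_re, Complex.add_im, Complex.mul_re, Complex.mul_im, pow_two] at h1 h2
    constructor <;> nlinarith [h1, h2]
  obtain ⟨hre, him⟩ := hreim
  by_contra hxpos
  push_neg at hxpos
  have hy2 : y ^ 2 = x ^ 2 + β * x + α * lam.re := by linarith
  have hy2ge : α * lam.re ≤ y ^ 2 := by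
    nlinarith [sq_nonneg x, mul_nonneg hβ.le hxpos]
  have him' : α * lam.im = -(y * (2 * x + β)) := by linarith
  have h2 : (α * lam.im) ^ 2 = y ^ 2 * (2 * x + β) ^ 2 := by rw [him']; ring
  have h3 : β ^ 2 ≤ (2 * x + β) ^ 2 := by
    nlinarith [sq_nonneg x, mul_nonneg hxpos hβ.le]
  have h4 : α * lam.re * β ^ 2 ≤ (α * lam.im) ^ 2 := by
    rw [h2]
    have h5 : 0 ≤ α * lam.re := le_of_lt (mul_pos hα hlre)
    have h6 : 0 ≤ β ^ 2 := sq_nonneg β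
    exact mul_le_mul hy2ge h3 h6 (le_trans h5 hy2ge)
  have h7 : α ^ 2 * lam.im ^ 2 ≤ 2 * μ * lam.re * α ^ 2 := by
    nlinarith [sq_nonneg α, hkey]
  have h8 : α * lam.re * (2 * α * μ) < α * lam.re * β ^ 2 := by
    have := mul_pos hα hlre
    exact (mul_lt_mul_iff_right₀ this).mpr hgain
  nlinarith [h4, h7, h8]

theorem absolute_protocol_scalable_hurwitz (μ : ℝ) (hμ : 0 < μ)
    (α β : ℝ) (hα : 0 < α) (hβ : 0 < β) (hgain : β ^ 2 > 2 * α * μ) :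
    ∀ (n : ℕ) (L : Matrix (Fin n) (Fin n) ℝ),
      (∀ i j, i ≠ j → L i j ≤ 0) →
      (∀ i, ∑ j, L i j = 0) →
      (∀ i, L i i ≤ μ) →
      ∀ lam : ℂ, lam ∈ spectrum ℂ (L.map (Complex.ofReal)) → lam ≠ 0 →
        ∀ s : ℂ, s ^ 2 + (β : ℂ) * s + (α : ℂ) * lam = 0 → s.re < 0 := by
  intro n L hoff hrow hdiag lam hspec hne s hs
  set A := L.map (Complex.ofReal) with hA
  -- move to eigenvalue of toLin'
  have hspec' : lam ∈ spectrum ℂ (Matrix.toLin' A) := by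
    have h := AlgEquiv.spectrum_eq (Matrix.toLinAlgEquiv' : Matrix (Fin n) (Fin n) ℂ ≃ₐ[ℂ] _) A
    have h2 : Matrix.toLinAlgEquiv' A = Matrix.toLin' A := rfl
    rw [h2] at h
    rw [h]; exact hspec
  have heig : Module.End.HasEigenvalue (Matrix.toLin' A) lam :=
    Module.End.HasEigenvalue.of_mem_spectrum hspec'
  obtain ⟨k, hk⟩ := eigenvalue_mem_ball heig
  rw [Metric.mem_closedBall] at hk
  -- diagonal entry
  have hdk : 0 ≤ L k k := by
    have := hrow k
    have h1 : L k k = ∑ j ∈ Finset.univ.erase k, (- L k j) := by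
      rw [Finset.sum_neg_distrib]
      have := Finset.sum_erase_eq_sub (f := fun j => L k j) (Finset.mem_univ k)
      rw [this, hrow k]; ring
    rw [h1]
    exact Finset.sum_nonneg fun j hj => by
      have := hoff k j (fun h => (Finset.mem_erase.mp hj).1 h.symm)
      linarith
  have hsum : ∑ j ∈ Finset.univ.erase k, ‖A k j‖ = L k k := by
    have h1 : ∀ j ∈ Finset.univ.erase k, ‖A k j‖ = - L k j := by
      intro j hj
      have hle := hoff k j (fun h => (Finset.mem_erase.mp hj).1 h.symm)
      simp [hA, Matrix.map_apply, Complex.norm_real, abs_of_nonpos hle]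
    rw [Finset.sum_congr rfl h1, Finset.sum_neg_distrib,
      Finset.sum_erase_eq_sub (f := fun j => L k j) (Finset.mem_univ k), hrow k]
    ring
  have hAkk : A k k = (L k k : ℂ) := rfl
  rw [hsum, hAkk] at hk
  set d := L k k with hd
  -- |lam - d| ≤ d  gives  lam.re² + lam.im² ≤ 2 d lam.re
  have hdisk : lam.re ^ 2 + lam.im ^ 2 ≤ 2 * d * lam.re := by
    have h1 : ‖lam - (d : ℂ)‖ ≤ d := by rw [← dist_eq_norm]; exact hk
    have h2 : Complex.normSq (lam - (d : ℂ)) ≤ d ^ 2 := by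
      rw [← Complex.sq_norm]
      have := norm_nonneg (lam - (d : ℂ))
      nlinarith
    simp [Complex.normSq_apply] at h2
    nlinarith
  have hpos : 0 < lam.re ^ 2 + lam.im ^ 2 := by
    have := Complex.normSq_pos.mpr hne
    rw [Complex.normSq_apply] at this
    nlinarith
  have hlre : 0 < lam.re := by nlinarith [sq_nonneg lam.im, sq_nonneg lam.re]
  have hkey : lam.im ^ 2 ≤ 2 * μ * lam.re := by
    have hdμ := hdiag k
    nlinarith [sq_nonneg lam.re]
  exact aux_root_neg μ α β hμ hα hβ hgain lam hlre hkey s hs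
end

section
/- Let n ≥ m ≥ 2 and let L̄ be the real n × n matrix defined by: L̄_{1,1} = 1 and L̄_{1,m} = −1; for 2 ≤ i ≤ n, L̄_{i,i} = 1 and L̄_{i,i−1} = −1; and all other entries 0. Then the characteristic polynomial of L̄ (over ℂ) equals (X − 1)^{n−m} · ∏_{k=0}^{m−1} (X − (1 − ζ^k)) with ζ = exp(2πi/m); i.e., the spectrum of L̄ is the spectrum of the directed ring Laplacian on m vertices together with the eigenvalue 1 with multiplicity n − m. -/
/-- The Laplacian of the directed path graph on `n` vertices with unit edge
weights together with one unit-weight reverse edge from vertex `m` to vertex `1`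
(vertices numbered `1, …, n`, here represented by `Fin n` with `0, …, n-1`). -/
def mixedPathLaplacian (n m : ℕ) : Matrix (Fin n) (Fin n) ℝ :=
  fun i j =>
    if (i : ℕ) = 0 then
      (if (j : ℕ) = 0 then 1 else if (j : ℕ) = m - 1 then -1 else 0)
    else
      (if j = i then 1 else if (j : ℕ) + 1 = (i : ℕ) then -1 else 0)

open Polynomial Matrix Finset in
private lemma ringdet (m' : ℕ) :
    (Matrix.of fun i j : Fin (m' + 2) =>
      if i = j then (X - 1 : ℂ[X])
      else if (i : ℕ) = 0 ∧ (j : ℕ) = m' + 1 then 1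
      else if (j : ℕ) + 1 = (i : ℕ) then 1 else 0).det
      = (X - 1) ^ (m' + 2) - (-1) ^ (m' + 2) := by
  set M : Matrix (Fin (m' + 2)) (Fin (m' + 2)) ℂ[X] := Matrix.of fun i j =>
      if i = j then (X - 1 : ℂ[X])
      else if (i : ℕ) = 0 ∧ (j : ℕ) = m' + 1 then 1
      else if (j : ℕ) + 1 = (i : ℕ) then 1 else 0 with hM
  rw [det_succ_row_zero]
  rw [Fin.sum_univ_succ]
  have h2 : ∑ j : Fin (m' + 1), (-1 : ℂ[X]) ^ ((j.succ : Fin (m'+2)) : ℕ) * M 0 j.succ *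
      (M.submatrix Fin.succ (Fin.succAbove j.succ)).det
      = (-1) ^ (m' + 1) *
        (M.submatrix Fin.succ (Fin.succAbove (Fin.last m').succ)).det := by
    rw [Finset.sum_eq_single (Fin.last m')]
    · have hv : M 0 (Fin.last m').succ = 1 := by
        rw [hM]; simp only [Matrix.of_apply]
        rw [if_neg (by simp [Fin.ext_iff]), if_pos (by simp [Fin.ext_iff])]
      rw [hv]
      have hs : (Fin.last m').succ = Fin.last (m' + 1) := rfl
      rw [hs, Fin.succAbove_last, mul_one, Fin.val_last]
    · intro j _ hj
      have hjn : (j : ℕ) ≠ m' := by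
        intro h; exact hj (Fin.ext (by simp [h]))
      have hv : M 0 j.succ = 0 := by
        rw [hM]; simp only [Matrix.of_apply]
        rw [if_neg (Fin.succ_ne_zero j).symm, if_neg (by simp [Fin.ext_iff]; omega),
          if_neg (show ¬ ((j.succ : ℕ) + 1 = ((0 : Fin (m' + 2)) : ℕ)) by simp)]
      rw [hv]; ring
    · simp
  rw [h2]
  have hd1 : (M.submatrix Fin.succ (Fin.succAbove 0)).det = (X - 1) ^ (m' + 1) := by
    have hb : (M.submatrix Fin.succ (Fin.succAbove 0)).BlockTriangular OrderDual.toDual := by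
      intro i j hij
      have hij' : (i : ℕ) < (j : ℕ) := hij
      simp only [Matrix.submatrix_apply, hM, Matrix.of_apply, Fin.succAbove_zero]
      rw [if_neg (by simp [Fin.ext_iff]; omega), if_neg (by simp), if_neg (by simp; omega)]
    rw [Matrix.det_of_lowerTriangular _ hb]
    have hdiag : ∀ i : Fin (m'+1), (M.submatrix Fin.succ (Fin.succAbove 0)) i i = X - 1 := by
      intro i; simp [hM]
    rw [Finset.prod_congr rfl fun i _ => hdiag i]
    simp
  have hd2 : (M.submatrix Fin.succ (Fin.succAbove (Fin.last m').succ)).det = 1 := by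
    have hs : (Fin.last m').succ = Fin.last (m' + 1) := rfl
    rw [hs, Fin.succAbove_last]
    have hb : (M.submatrix Fin.succ Fin.castSucc).BlockTriangular id := by
      intro i j hij
      have hij' : (j : ℕ) < (i : ℕ) := hij
      simp only [Matrix.submatrix_apply, hM, Matrix.of_apply]
      rw [if_neg (by simp [Fin.ext_iff]; omega), if_neg (by simp), if_neg (by simp; omega)]
    rw [Matrix.det_of_upperTriangular hb]
    have hdiag : ∀ i : Fin (m'+1), (M.submatrix Fin.succ Fin.castSucc) i i = 1 := by
      intro i
      simp only [Matrix.submatrix_apply, hM, Matrix.of_apply]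
      rw [if_neg (by simp [Fin.ext_iff]), if_neg (by simp), if_pos (by simp)]
    rw [Finset.prod_congr rfl fun i _ => hdiag i]
    simp
  have hd0 : M 0 0 = X - 1 := by rw [hM]; simp
  rw [hd1, hd2, hd0]
  simp only [Fin.val_zero, pow_zero, one_mul, mul_one]
  ring

open Polynomial Matrix Finset in
private lemma pathdet (t : ℕ) :
    (Matrix.of fun i j : Fin t =>
      if i = j then (X - 1 : ℂ[X]) else if (j : ℕ) + 1 = (i : ℕ) then 1 else 0).det
      = (X - 1) ^ t := by
  rw [Matrix.det_of_lowerTriangular _ (by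
    intro i j hij
    have hij' : (i : ℕ) < (j : ℕ) := hij
    simp only [Matrix.of_apply]
    rw [if_neg (by simp [Fin.ext_iff]; omega), if_neg (by omega)])]
  have : ∀ i : Fin t, (Matrix.of fun i j : Fin t =>
      if i = j then (X - 1 : ℂ[X]) else if (j : ℕ) + 1 = (i : ℕ) then 1 else 0) i i = X - 1 := by
    intro i; simp
  rw [Finset.prod_congr rfl fun i _ => this i]
  simp

open Polynomial Matrix Finset in
private lemma blockdecomp (m' t : ℕ) :
    (charmatrix ((mixedPathLaplacian ((m' + 2) + t) (m' + 2)).map Complex.ofReal)).submatrix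
        finSumFinEquiv finSumFinEquiv =
      Matrix.fromBlocks
        (Matrix.of fun i j : Fin (m' + 2) =>
          if i = j then (X - 1 : ℂ[X])
          else if (i : ℕ) = 0 ∧ (j : ℕ) = m' + 1 then 1
          else if (j : ℕ) + 1 = (i : ℕ) then 1 else 0)
        0
        (Matrix.of fun (i : Fin t) (j : Fin (m' + 2)) =>
          if (i : ℕ) = 0 ∧ (j : ℕ) = m' + 1 then (1 : ℂ[X]) else 0)
        (Matrix.of fun i j : Fin t =>
          if i = j then (X - 1 : ℂ[X]) else if (j : ℕ) + 1 = (i : ℕ) then 1 else 0) := by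
  ext i j
  rcases i with i | i <;> rcases j with j | j <;>
    simp only [Matrix.submatrix_apply, finSumFinEquiv_apply_left, finSumFinEquiv_apply_right,
      Matrix.fromBlocks_apply₁₁, Matrix.fromBlocks_apply₁₂, Matrix.fromBlocks_apply₂₁,
      Matrix.fromBlocks_apply₂₂, charmatrix_apply, Matrix.map_apply, mixedPathLaplacian,
      Matrix.of_apply, Matrix.diagonal_apply, Matrix.zero_apply, Fin.coe_castAdd, Fin.coe_natAdd,
      Fin.ext_iff] <;>
  split_ifs <;>
    first
      | rfl
      | (simp_all; done)
      | (simp_all <;> omega)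

open Polynomial in
theorem mixed_path_charpoly (n m : ℕ) (hm : 2 ≤ m) (hmn : m ≤ n)
    (ζ : ℂ) (hζ : ζ = Complex.exp (2 * Real.pi * Complex.I / m)) :
    ((mixedPathLaplacian n m).map Complex.ofReal).charpoly =
      (X - 1) ^ (n - m) * ∏ k ∈ Finset.range m, (X - C (1 - ζ ^ k)) := by
  obtain ⟨m', rfl⟩ : ∃ m', m = m' + 2 := ⟨m - 2, by omega⟩
  obtain ⟨t, rfl⟩ : ∃ t, n = (m' + 2) + t := ⟨n - (m' + 2), by omega⟩
  -- right-hand side product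
  have hζprim : IsPrimitiveRoot ζ (m' + 2) := by
    rw [hζ]; exact Complex.isPrimitiveRoot_exp _ (by omega)
  have hprod : ∏ k ∈ Finset.range (m' + 2), (X - C (1 - ζ ^ k))
      = (X - 1) ^ (m' + 2) - (-1) ^ (m' + 2) := by
    have h1 : (X : ℂ[X]) ^ (m' + 2) - C 1
        = ∏ k ∈ Finset.range (m' + 2), (X - C (ζ ^ k * 1)) :=
      X_pow_sub_C_eq_prod hζprim (by omega) (one_pow _)
    have h2 := congrArg (Polynomial.aeval ((1 : ℂ[X]) - X)) h1
    simp only [map_sub, map_prod, Polynomial.aeval_X, Polynomial.aeval_C, map_pow, mul_one,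
      Polynomial.algebraMap_eq, map_one] at h2
    have h3 : ∀ k, (X - C (1 - ζ ^ k)) = -((1 - X) - C ζ ^ k) := by
      intro k; simp only [map_sub, map_one, map_pow]; ring
    calc ∏ k ∈ Finset.range (m' + 2), (X - C (1 - ζ ^ k))
        = ∏ k ∈ Finset.range (m' + 2), (-1) * ((1 - X) - C ζ ^ k) := by
          refine Finset.prod_congr rfl fun k _ => ?_
          rw [h3 k]; ring
      _ = (-1) ^ (m' + 2) * ∏ k ∈ Finset.range (m' + 2), ((1 - X) - C ζ ^ k) := by
          rw [Finset.prod_mul_distrib, Finset.prod_const, Finset.card_range]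
      _ = (-1) ^ (m' + 2) * ((1 - X) ^ (m' + 2) - 1) := by rw [← h2]
      _ = ((-1) * (1 - X)) ^ (m' + 2) - (-1) ^ (m' + 2) := by
          rw [mul_pow]; ring
      _ = (X - 1) ^ (m' + 2) - (-1) ^ (m' + 2) := by ring_nf
  have hsub : (m' + 2) + t - (m' + 2) = t := by omega
  rw [hsub, hprod]
  -- left-hand side determinant
  rw [Matrix.charpoly, ← Matrix.det_submatrix_equiv_self finSumFinEquiv, blockdecomp,
    Matrix.det_fromBlocks_zero₁₂, ringdet, pathdet]
  ring
end

section
/- For every pair of control gains α > 0 and β > 0 there exist integers n ≥ m ≥ 2 and a nonzero complex eigenvalue γ of the mixed-path Laplacian L̄ (the Laplacian of the directed path on n vertices with unit weights plus one unit-weight reverse edge from vertex m to vertex 1) such that β²·Re γ·|γ|² ≤ α·(Im γ)²; consequently the quadratic s² + βγs + αγ has a complex root with nonnegative real part. (This is the spectral content of the claim that the relative velocity protocol cannot achieve completely scalable second-order consensus: no fixed gains satisfy the consensus criterion β²/α > max_{λ≠0} (Im λ)²/(Re λ·|λ|²) on every graph of the mixed path family.) -/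
set_option maxHeartbeats 1000000 in
lemma quad_root (α β : ℝ) (hα : 0 ≤ α) (γ : ℂ)
    (h : β ^ 2 * γ.re * ‖γ‖ ^ 2 ≤ α * γ.im ^ 2) :
    ∃ s : ℂ, s ^ 2 + (β : ℂ) * γ * s + (α : ℂ) * γ = 0 ∧ 0 ≤ s.re := by
  set a := γ.re with ha
  set b := γ.im with hb
  have habs : (‖γ‖ : ℝ) ^ 2 = a ^ 2 + b ^ 2 := by
    rw [Complex.sq_norm, Complex.normSq_apply]; ring
  rw [habs] at h
  set zre : ℝ := β ^ 2 * (a ^ 2 - b ^ 2) - 4 * α * a with hzre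
  set zim : ℝ := 2 * β ^ 2 * a * b - 4 * α * b with hzim
  set r : ℝ := Real.sqrt (zre ^ 2 + zim ^ 2) with hr
  have hr0 : 0 ≤ r := Real.sqrt_nonneg _
  have hr2 : r ^ 2 = zre ^ 2 + zim ^ 2 := Real.sq_sqrt (by positivity)
  have hrzre : |zre| ≤ r := by
    rw [← Real.sqrt_sq_eq_abs]
    exact Real.sqrt_le_sqrt (by nlinarith [sq_nonneg zim])
  have h1 : 0 ≤ (r + zre) / 2 := by cases abs_le.mp hrzre; linarith
  have h2 : 0 ≤ (r - zre) / 2 := by cases abs_le.mp hrzre; linarith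
  set u : ℝ := Real.sqrt ((r + zre) / 2) with hu
  set v : ℝ := Real.sqrt ((r - zre) / 2) with hv
  have hu0 : 0 ≤ u := Real.sqrt_nonneg _
  have hv0 : 0 ≤ v := Real.sqrt_nonneg _
  have hu2 : u ^ 2 = (r + zre) / 2 := Real.sq_sqrt h1
  have hv2 : v ^ 2 = (r - zre) / 2 := Real.sq_sqrt h2
  have huv : u * v = |zim| / 2 := by
    rw [hu, hv, ← Real.sqrt_mul h1,
      show (r + zre) / 2 * ((r - zre) / 2) = (zim / 2) ^ 2 by linear_combination hr2 / 4,
      Real.sqrt_sq_eq_abs, abs_div]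
    norm_num
  set ε : ℝ := if 0 ≤ zim then (1 : ℝ) else -1 with hε
  have hεsq : ε ^ 2 = 1 := by rw [hε]; split <;> norm_num
  have hεzim : ε * |zim| = zim := by
    rw [hε]; split
    · rw [abs_of_nonneg ‹_›]; ring
    · rw [abs_of_neg (by linarith [not_le.mp ‹_›])]; ring
  set d : ℂ := ⟨u, ε * v⟩ with hd
  have hzc : ((β : ℂ) * γ) ^ 2 - 4 * (α : ℂ) * γ = ⟨zre, zim⟩ := by
    apply Complex.ext <;>
      simp [pow_two, Complex.mul_re, Complex.mul_im, ← ha, ← hb, hzre, hzim] <;> ring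
  have hdsq : d ^ 2 = ((β : ℂ) * γ) ^ 2 - 4 * (α : ℂ) * γ := by
    rw [hzc]
    apply Complex.ext
    · simp only [pow_two, Complex.mul_re, hd]
      linear_combination hu2 - hv2 - v ^ 2 * hεsq
    · simp only [pow_two, Complex.mul_im, hd]
      linear_combination 2 * ε * huv + hεzim
  refine ⟨(d - (β : ℂ) * γ) / 2, ?_, ?_⟩
  · linear_combination hdsq / 4
  · have hre : ((d - (β : ℂ) * γ) / 2).re = (u - β * a) / 2 := by
      simp [Complex.div_re, Complex.sub_re, Complex.mul_re, hd, ← ha, ← hb]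
    rw [hre]
    have key : 0 ≤ α * (α * b ^ 2 - β ^ 2 * a * (a ^ 2 + b ^ 2)) :=
      mul_nonneg hα (by linarith)
    have hdiff : r ^ 2 - (2 * β ^ 2 * a ^ 2 - zre) ^ 2
        = 16 * α * (α * b ^ 2 - β ^ 2 * a * (a ^ 2 + b ^ 2)) := by
      rw [hr2, hzre, hzim]; ring
    have hrR : 2 * β ^ 2 * a ^ 2 - zre ≤ r := by
      rcases le_or_gt (2 * β ^ 2 * a ^ 2 - zre) 0 with hR | hR
      · linarith
      · nlinarith [hdiff, key, hr0]
    have hba : β * a ≤ u := by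
      rcases le_or_gt (β * a) 0 with hba | hba
      · linarith
      · have h3 : (β * a) ^ 2 ≤ u ^ 2 := by nlinarith [hu2, hrR]
        calc β * a = Real.sqrt ((β * a) ^ 2) := (Real.sqrt_sq hba.le).symm
          _ ≤ Real.sqrt (u ^ 2) := Real.sqrt_le_sqrt h3
          _ = u := Real.sqrt_sq hu0
    linarith

lemma eigen (m : ℕ) (hm : 2 ≤ m) (ζ : ℂ) (hζ0 : ζ ≠ 0) (hζm : ζ ^ m = 1) :
    (1 - ζ⁻¹) ∈ spectrum ℂ ((mixedPathLaplacian m m).map Complex.ofReal) := by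
  set M := (mixedPathLaplacian m m).map Complex.ofReal with hM
  set γ : ℂ := 1 - ζ⁻¹ with hγ
  rw [spectrum.mem_iff]
  intro hunit
  set v : Fin m → ℂ := fun j => ζ ^ (j : ℕ) with hv
  have hinv : ζ ^ (m - 1) = ζ⁻¹ := by
    apply eq_inv_of_mul_eq_one_right
    rw [← pow_succ', Nat.sub_add_cancel (by omega)]
    exact hζm
  have hMv : M.mulVec v = γ • v := by
    funext i
    simp only [Matrix.mulVec, dotProduct, hM, Matrix.map_apply,
      mixedPathLaplacian, Pi.smul_apply, smul_eq_mul]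
    rcases Nat.eq_zero_or_pos (i : ℕ) with hi | hi
    · rw [Fintype.sum_eq_add (⟨0, by omega⟩ : Fin m) (⟨m - 1, by omega⟩ : Fin m)
        (by simp; omega)
        (by
          intro c ⟨hc0, hc1⟩
          have h0 : (c : ℕ) ≠ 0 := fun h => hc0 (Fin.ext h)
          have h1 : (c : ℕ) ≠ m - 1 := fun h => hc1 (Fin.ext h)
          simp [hi, h0, h1])]
      simp only [hi, hv, hγ, if_pos, if_neg]
      rw [if_neg (show m - 1 ≠ 0 by omega)]
      simp [hinv]
      ring
    · have hi0 : (i : ℕ) ≠ 0 := by omega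
      have hilt : (i : ℕ) - 1 < m := by omega
      have hpow : ζ ^ ((i : ℕ) - 1) * ζ = ζ ^ (i : ℕ) := by
        rw [← pow_succ, Nat.sub_add_cancel (by omega)]
      have h2 : ζ⁻¹ * ζ ^ (i : ℕ) = ζ ^ ((i : ℕ) - 1) := by
        rw [← hpow, mul_comm (ζ ^ ((i : ℕ) - 1)) ζ, ← mul_assoc,
          inv_mul_cancel₀ hζ0, one_mul]
      have hne : ¬ ((⟨(i : ℕ) - 1, hilt⟩ : Fin m) = i) := by
        intro h
        have := congrArg Fin.val h
        simp at this; omega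
      rw [Fintype.sum_eq_add i (⟨(i : ℕ) - 1, hilt⟩ : Fin m)
        (fun h => hne h.symm)
        (by
          intro c ⟨hc0, hc1⟩
          have h1 : (c : ℕ) + 1 ≠ (i : ℕ) := by
            intro h
            exact hc1 (Fin.ext (by simp; omega))
          simp [hi0, hc0, h1])]
      rw [if_neg hi0, if_neg hi0, if_pos rfl, if_neg hne,
        if_pos (show (i : ℕ) - 1 + 1 = (i : ℕ) by omega)]
      simp only [hv, hγ]
      push_cast
      linear_combination h2
  have key : (algebraMap ℂ (Matrix (Fin m) (Fin m) ℂ) γ - M).mulVec v = 0 := by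
    rw [Matrix.sub_mulVec, Algebra.algebraMap_eq_smul_one, Matrix.smul_mulVec,
      Matrix.one_mulVec, hMv]
    simp
  obtain ⟨B, hB⟩ := hunit.exists_left_inv
  have hv0 : v = 0 := by
    calc v = (1 : Matrix (Fin m) (Fin m) ℂ).mulVec v := (Matrix.one_mulVec v).symm
      _ = (B * (algebraMap ℂ (Matrix (Fin m) (Fin m) ℂ) γ - M)).mulVec v := by rw [hB]
      _ = B.mulVec ((algebraMap ℂ (Matrix (Fin m) (Fin m) ℂ) γ - M).mulVec v) := by
          rw [← Matrix.mulVec_mulVec]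
      _ = B.mulVec 0 := by rw [key]
      _ = 0 := Matrix.mulVec_zero B
  have : v ⟨0, by omega⟩ = 0 := by rw [hv0]; rfl
  simp [hv] at this


theorem relative_protocol_not_scalable (α β : ℝ) (hα : 0 < α) (hβ : 0 < β) :
    ∃ n m : ℕ, 2 ≤ m ∧ m ≤ n ∧
      ∃ γ : ℂ, γ ∈ spectrum ℂ ((mixedPathLaplacian n m).map Complex.ofReal) ∧
        γ ≠ 0 ∧
        β ^ 2 * γ.re * ‖γ‖ ^ 2 ≤ α * γ.im ^ 2 ∧
        ∃ s : ℂ, s ^ 2 + (β : ℂ) * γ * s + (α : ℂ) * γ = 0 ∧ 0 ≤ s.re := by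
  have hπ := Real.pi_pos
  set m : ℕ := 4 + Nat.ceil (4 * Real.pi ^ 2 * β ^ 2 / α) with hmdef
  have hm4 : 4 ≤ m := by omega
  have hm2 : 2 ≤ m := by omega
  have hmR : (0 : ℝ) < m := by
    have : (4 : ℝ) ≤ m := by exact_mod_cast hm4
    linarith
  have hm4R : (4 : ℝ) ≤ m := by exact_mod_cast hm4
  have hmx : 4 * Real.pi ^ 2 * β ^ 2 / α ≤ (m : ℝ) := by
    calc 4 * Real.pi ^ 2 * β ^ 2 / α ≤ (Nat.ceil (4 * Real.pi ^ 2 * β ^ 2 / α) : ℝ) :=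
          Nat.le_ceil _
      _ ≤ (m : ℝ) := by exact_mod_cast Nat.le_add_left _ 4
  have key1 : 4 * Real.pi ^ 2 * β ^ 2 ≤ (m : ℝ) * α := (div_le_iff₀ hα).mp hmx
  set θ : ℝ := 2 * Real.pi / m with hθdef
  have hθpos : 0 < θ := by positivity
  have hθle : θ ≤ Real.pi / 2 := by
    rw [hθdef, div_le_div_iff₀ hmR (by norm_num : (0:ℝ) < 2)]
    nlinarith
  have hβθ : β ^ 2 * θ ^ 2 ≤ α := by
    rw [hθdef, div_pow, ← mul_div_assoc, div_le_iff₀ (by positivity)]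
    nlinarith [mul_nonneg hα.le (by nlinarith : (0:ℝ) ≤ (m:ℝ)^2 - (m:ℝ))]
  have hc0 : 0 ≤ Real.cos θ := Real.cos_nonneg_of_mem_Icc ⟨by linarith, hθle⟩
  have hc1 : Real.cos θ ≤ 1 := Real.cos_le_one θ
  have hs0 : 0 < Real.sin θ := Real.sin_pos_of_pos_of_lt_pi hθpos (by linarith)
  have h1c : 1 - Real.cos θ ≤ θ ^ 2 / 2 := by
    have := Real.one_sub_sq_div_two_le_cos (x := θ)
    linarith
  have hs2 : Real.sin θ ^ 2 = 1 - Real.cos θ ^ 2 := Real.sin_sq θ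
  set ζ : ℂ := Complex.exp ((θ : ℂ) * Complex.I) with hζdef
  have hζ0 : ζ ≠ 0 := Complex.exp_ne_zero _
  have hζm : ζ ^ m = 1 := by
    rw [hζdef, ← Complex.exp_nat_mul]
    rw [show (m : ℂ) * ((θ : ℂ) * Complex.I) = 2 * Real.pi * Complex.I by
      rw [hθdef]
      push_cast
      have : (m : ℂ) ≠ 0 := by
        exact_mod_cast (by positivity : (m:ℝ) ≠ 0)
      field_simp]
    exact Complex.exp_two_pi_mul_I
  set γ : ℂ := 1 - ζ⁻¹ with hγdef
  have hζinv : ζ⁻¹ = Complex.exp (((-θ : ℝ) : ℂ) * Complex.I) := by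
    rw [hζdef, ← Complex.exp_neg]
    congr 1
    push_cast
    ring
  have hγre : γ.re = 1 - Real.cos θ := by
    rw [hγdef, Complex.sub_re, Complex.one_re, hζinv,
      Complex.exp_ofReal_mul_I_re, Real.cos_neg]
  have hγim : γ.im = Real.sin θ := by
    rw [hγdef, Complex.sub_im, Complex.one_im, hζinv,
      Complex.exp_ofReal_mul_I_im, Real.sin_neg]
    ring
  have hγ0 : γ ≠ 0 := by
    intro h
    rw [h, Complex.zero_im] at hγim
    linarith
  have habs : ‖γ‖ ^ 2 = γ.re ^ 2 + γ.im ^ 2 := by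
    rw [Complex.sq_norm, Complex.normSq_apply]; ring
  have hineq : β ^ 2 * γ.re * ‖γ‖ ^ 2 ≤ α * γ.im ^ 2 := by
    rw [habs, hγre, hγim]
    nlinarith [mul_le_mul_of_nonneg_left h1c (sq_nonneg β),
      sub_nonneg.2 hc1, mul_nonneg hα.le hc0,
      mul_nonneg (sub_nonneg.2 hc1) (mul_nonneg hα.le hc0),
      mul_nonneg (sub_nonneg.2 hc1) (mul_nonneg (sq_nonneg β) (sub_nonneg.2 h1c))]
  exact ⟨m, m, hm2, le_refl m, γ, eigen m hm2 ζ hζ0 hζm, hγ0, hineq,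
    quad_root α β hα.le γ hineq⟩
end

section
/- Let n ≥ 2, ρ > 0, and let ā_{ij} ≥ 0 for all 1 ≤ i < j ≤ n. Define the real n × n matrix L̄ by: L̄_{i,1} = −ρ for 2 ≤ i ≤ n; L̄_{i,j} = −ā_{ij} for 1 ≤ i < j ≤ n; L̄_{1,1} = p_{11} and L̄_{i,i} = ρ + p_{ii} for 2 ≤ i ≤ n, where p_{ii} = Σ_{j=i+1}^{n} ā_{ij} (so p_{nn} = 0 and L̄_{n,n} = ρ); all other entries 0. Then det(λI_n − L̄) = λ·∏_{i=1}^{n−1} (λ − (ρ + p_{ii})). -/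
set_option linter.unusedSectionVars false

namespace MixedStarAux

open Finset

variable {n : ℕ} [NeZero n]

noncomputable def pd (b : Fin n → Fin n → ℂ) (i : Fin n) : ℂ :=
  ∑ k ∈ Finset.univ.filter (fun k => i < k), b i k

noncomputable def Mx (lam r : ℂ) (b : Fin n → Fin n → ℂ) : Matrix (Fin n) (Fin n) ℂ :=
  fun i j =>
    if i = j then (if i = 0 then lam - pd b i else lam - r - pd b i)
    else if j = 0 then r else if i < j then b i j else 0

noncomputable def Smat (n : ℕ) [NeZero n] : Matrix (Fin n) (Fin n) ℂ :=
  fun i j => if j = 0 then 1 else if i = j then 1 else 0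

noncomputable def S'mat (n : ℕ) [NeZero n] : Matrix (Fin n) (Fin n) ℂ :=
  fun i j => if i = j then 1 else if j = 0 then -1 else 0

noncomputable def Emat (n : ℕ) [NeZero n] : Matrix (Fin n) (Fin n) ℂ :=
  fun i j => if i = j then 1
    else if 1 ≤ i.val ∧ i.val ≤ n - 2 ∧ j.val = i.val + 1 then -1 else 0

noncomputable def Fmat (n : ℕ) [NeZero n] : Matrix (Fin n) (Fin n) ℂ :=
  fun i j => if i = j then 1
    else if 1 ≤ i.val ∧ i.val ≤ n - 2 ∧ j.val = n - 1 then 1 else 0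

lemma sum_one (f : Fin n → ℂ) (i : Fin n) (h : ∀ k, k ≠ i → f k = 0) :
    ∑ k, f k = f i :=
  Finset.sum_eq_single_of_mem i (Finset.mem_univ i) (fun k _ hk => h k hk)

lemma sum_two (f : Fin n → ℂ) (i j : Fin n) (hij : i ≠ j)
    (h : ∀ k, k ≠ i → k ≠ j → f k = 0) : ∑ k, f k = f i + f j := by
  rw [← Finset.add_sum_erase _ f (Finset.mem_univ i),
    ← Finset.add_sum_erase _ f (Finset.mem_erase.2 ⟨hij.symm, Finset.mem_univ j⟩)]
  have h0 : ∑ k ∈ (Finset.univ.erase i).erase j, f k = 0 := by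
    apply Finset.sum_eq_zero
    intro k hk
    simp only [Finset.mem_erase] at hk
    exact h k hk.2.1 hk.1
  rw [h0]; ring

lemma sum_mask (g : Fin n → ℂ) :
    ∑ k, (if k = (0 : Fin n) then 0 else g k) = (∑ k, g k) - g 0 := by
  rw [← Finset.add_sum_erase _ _ (Finset.mem_univ (0 : Fin n)),
    ← Finset.add_sum_erase _ g (Finset.mem_univ (0 : Fin n))]
  rw [if_pos rfl]
  have h0 : ∑ k ∈ Finset.univ.erase (0 : Fin n), (if k = (0:Fin n) then 0 else g k)
      = ∑ k ∈ Finset.univ.erase (0 : Fin n), g k := by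
    apply Finset.sum_congr rfl
    intro k hk
    rw [if_neg (Finset.mem_erase.1 hk).1]
  rw [h0]; ring

lemma val_succ (hn : 2 ≤ n) (i : Fin n) (h : i.val + 1 < n) :
    ((i + 1 : Fin n)).val = i.val + 1 := by
  have h1 : (1 : Fin n).val = 1 % n := Fin.val_one' n
  have h2 : ((i + 1 : Fin n)).val = (i.val + (1:Fin n).val) % n := Fin.add_def i 1 ▸ rfl
  rw [h2, h1]
  have : 1 % n = 1 := Nat.mod_eq_of_lt (by omega)
  rw [this, Nat.mod_eq_of_lt h]

variable (lam r : ℂ) (b : Fin n → Fin n → ℂ)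

lemma Mx_00 : Mx lam r b 0 0 = lam - pd b 0 := by simp [Mx]

lemma Mx_diag (i : Fin n) (hi : i ≠ 0) : Mx lam r b i i = lam - r - pd b i := by
  simp [Mx, hi]

lemma Mx_c0 (i : Fin n) (hi : i ≠ 0) : Mx lam r b i 0 = r := by
  simp [Mx, hi]

lemma Mx_0j (j : Fin n) (hj : j ≠ 0) : Mx lam r b 0 j = b 0 j := by
  have h1 : (0 : Fin n) ≠ j := fun h => hj h.symm
  have h2 : (0 : Fin n) < j := (Fin.pos_iff_ne_zero' j).2 hj
  simp [Mx, h1, hj, h2]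

lemma Mx_lower (i j : Fin n) (h : j < i) (hj : j ≠ 0) : Mx lam r b i j = 0 := by
  have h1 : i ≠ j := h.ne'
  have h2 : ¬ i < j := not_lt_of_gt h
  simp [Mx, h1, hj, h2]

lemma rowsum (i : Fin n) : ∑ k, Mx lam r b i k = lam := by
  by_cases hi : i = 0
  · subst hi
    rw [← Finset.add_sum_erase _ _ (Finset.mem_univ (0 : Fin n))]
    have h2 : ∑ k ∈ Finset.univ.erase (0:Fin n), Mx lam r b 0 k
        = ∑ k ∈ Finset.univ.erase (0:Fin n), b 0 k := by
      apply Finset.sum_congr rfl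
      intro k hk
      exact Mx_0j lam r b k (Finset.mem_erase.1 hk).1
    have h3 : Finset.univ.erase (0:Fin n)
        = Finset.univ.filter (fun k => (0:Fin n) < k) := by
      ext k
      simp only [Finset.mem_erase, Finset.mem_univ, and_true, Finset.mem_filter,
        true_and]
      exact (Fin.pos_iff_ne_zero' k).symm
    rw [h2, h3, Mx_00]
    have h4 : pd b 0 = ∑ k ∈ Finset.univ.filter (fun k => (0:Fin n) < k), b 0 k := rfl
    rw [← h4]; ring
  · rw [← Finset.add_sum_erase _ _ (Finset.mem_univ i),
      ← Finset.add_sum_erase _ _ (Finset.mem_erase.2 ⟨(Ne.symm hi), Finset.mem_univ (0:Fin n)⟩)]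
    have h2 : ∑ k ∈ (Finset.univ.erase i).erase (0:Fin n), Mx lam r b i k
        = ∑ k ∈ ((Finset.univ.erase i).erase (0:Fin n)).filter (fun k => i < k), b i k := by
      rw [Finset.sum_filter]
      apply Finset.sum_congr rfl
      intro k hk
      simp only [Finset.mem_erase] at hk
      have h1 : i ≠ k := fun h => hk.2.1 h.symm
      simp [Mx, h1, hk.1]
    have h3 : ((Finset.univ.erase i).erase (0:Fin n)).filter (fun k => i < k)
        = Finset.univ.filter (fun k => i < k) := by
      ext k
      have hi' : i.val ≠ 0 := by
        intro h
        exact hi (Fin.ext (by rw [h, Fin.val_zero]))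
      have hz : ((0 : Fin n) : ℕ) = 0 := rfl
      simp only [Finset.mem_filter, Finset.mem_erase, Finset.mem_univ, and_true,
        true_and, Fin.lt_def, Fin.ext_iff, hz]
      omega
    rw [h2, h3, Mx_diag lam r b i hi, Mx_c0 lam r b i hi]
    have h4 : pd b i = ∑ k ∈ Finset.univ.filter (fun k => i < k), b i k := rfl
    rw [← h4]; ring

noncomputable def Ymat : Matrix (Fin n) (Fin n) ℂ := S'mat n * (Mx lam r b * Smat n)
noncomputable def Zmat : Matrix (Fin n) (Fin n) ℂ := Emat n * Ymat lam r b
noncomputable def M3 : Matrix (Fin n) (Fin n) ℂ := Zmat lam r b * Fmat n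

lemma hMS (i j : Fin n) :
    (Mx lam r b * Smat n) i j = if j = 0 then lam else Mx lam r b i j := by
  rw [Matrix.mul_apply]
  by_cases hj : j = 0
  · subst hj
    rw [if_pos rfl]
    have h1 : ∀ k : Fin n, Mx lam r b i k * Smat n k 0 = Mx lam r b i k := by
      intro k; simp [Smat]
    rw [Finset.sum_congr rfl (fun k _ => h1 k)]
    exact rowsum lam r b i
  · rw [if_neg hj, sum_one _ j]
    · have h1 : Smat n j j = 1 := by simp [Smat, hj]
      rw [h1, mul_one]
    · intro k hk
      have h1 : Smat n k j = 0 := by simp [Smat, hj, hk]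
      rw [h1, mul_zero]

lemma hYe (i j : Fin n) :
    Ymat lam r b i j = if i = 0 then (if j = 0 then lam else Mx lam r b 0 j)
      else (if j = 0 then 0 else Mx lam r b i j - Mx lam r b 0 j) := by
  rw [Ymat, Matrix.mul_apply]
  by_cases hi : i = 0
  · subst hi
    rw [if_pos rfl, sum_one _ 0]
    · have h1 : S'mat n (0:Fin n) (0:Fin n) = 1 := by simp [S'mat]
      rw [h1, one_mul, hMS]
    · intro k hk
      have h1 : S'mat n (0:Fin n) k = 0 := by simp [S'mat, Ne.symm hk, hk]
      rw [h1, zero_mul]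
  · rw [if_neg hi, sum_two _ i 0 hi]
    · have e1 : S'mat n i i = 1 := by simp [S'mat]
      have e2 : S'mat n i (0:Fin n) = -1 := by simp [S'mat, hi]
      rw [e1, e2, one_mul, hMS, hMS]
      by_cases hj : j = 0
      · simp [hj]
      · simp only [if_neg hj, if_pos rfl]; ring
    · intro k hk hk0
      have h1 : S'mat n i k = 0 := by simp [S'mat, Ne.symm hk, hk0]
      rw [h1, zero_mul]

lemma hZe (hn : 2 ≤ n) (i j : Fin n) :
    Zmat lam r b i j = if 1 ≤ i.val ∧ i.val ≤ n - 2 then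
      Ymat lam r b i j - Ymat lam r b (i + 1) j
    else Ymat lam r b i j := by
  rw [Zmat, Matrix.mul_apply]
  by_cases h : 1 ≤ i.val ∧ i.val ≤ n - 2
  · rw [if_pos h]
    have hsv : ((i + 1 : Fin n)).val = i.val + 1 := val_succ hn i (by omega)
    have hii' : i ≠ i + 1 := by
      intro he
      have : i.val = i.val + 1 := by conv_lhs => rw [he, hsv]
      omega
    rw [sum_two _ i (i+1) hii']
    · have e1 : Emat n i i = 1 := by simp [Emat]
      have e2 : Emat n i (i+1) = -1 := by
        rw [Emat, if_neg hii', if_pos ⟨h.1, h.2, hsv⟩]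
      rw [e1, e2, one_mul]; ring
    · intro k hk hk'
      have h1 : Emat n i k = 0 := by
        have hv : ¬ (1 ≤ i.val ∧ i.val ≤ n - 2 ∧ k.val = i.val + 1) := by
          rintro ⟨-, -, hkv⟩
          exact hk' (Fin.ext (by rw [hkv, hsv]))
        rw [Emat, if_neg (Ne.symm hk), if_neg hv]
      rw [h1, zero_mul]
  · rw [if_neg h, sum_one _ i]
    · have h1 : Emat n i i = 1 := by simp [Emat]
      rw [h1, one_mul]
    · intro k hk
      have h1 : Emat n i k = 0 := by
        rw [Emat, if_neg (Ne.symm hk), if_neg]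
        rintro ⟨h1, h2, -⟩
        exact h ⟨h1, h2⟩
      rw [h1, zero_mul]

lemma hM3e (hn : 2 ≤ n) (i j : Fin n) :
    M3 lam r b i j = if j.val = n - 1 then
      (∑ k, Zmat lam r b i k) - Zmat lam r b i 0
    else Zmat lam r b i j := by
  rw [M3, Matrix.mul_apply]
  by_cases hj : j.val = n - 1
  · rw [if_pos hj]
    have h1 : ∀ k : Fin n, Zmat lam r b i k * Fmat n k j
        = if k = 0 then 0 else Zmat lam r b i k := by
      intro k
      by_cases hk : k = 0
      · subst hk
        have hne : (0 : Fin n) ≠ j := by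
          intro he
          have : (0:Fin n).val = n - 1 := by rw [he, hj]
          rw [Fin.val_zero] at this
          omega
        have h2 : Fmat n (0:Fin n) j = 0 := by
          rw [Fmat, if_neg hne, if_neg]
          rintro ⟨h3, -, -⟩
          rw [Fin.val_zero] at h3
          omega
        rw [if_pos rfl, h2, mul_zero]
      · rw [if_neg hk]
        have h2 : Fmat n k j = 1 := by
          by_cases hkj : k = j
          · rw [Fmat, if_pos hkj]
          · have hk0 : k.val ≠ 0 := fun h => hk (Fin.ext (by rw [h, Fin.val_zero]))
            have hkn : k.val ≠ n - 1 := by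
              intro h
              exact hkj (Fin.ext (by rw [h, hj]))
            have := k.isLt
            rw [Fmat, if_neg hkj, if_pos ⟨by omega, by omega, hj⟩]
        rw [h2, mul_one]
    rw [Finset.sum_congr rfl (fun k _ => h1 k), sum_mask]
  · rw [if_neg hj, sum_one _ j]
    · have h1 : Fmat n j j = 1 := by simp [Fmat]
      rw [h1, mul_one]
    · intro k hk
      have h1 : Fmat n k j = 0 := by
        rw [Fmat, if_neg hk, if_neg]
        rintro ⟨-, -, h2⟩
        exact hj h2
      rw [h1, mul_zero]

lemma sumY (i : Fin n) (hi : i ≠ 0) :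
    ∑ k, Ymat lam r b i k = lam - pd b 0 - r := by
  have h1 : ∀ k : Fin n, Ymat lam r b i k
      = if k = 0 then 0 else Mx lam r b i k - Mx lam r b 0 k := by
    intro k; rw [hYe, if_neg hi]
  rw [Finset.sum_congr rfl (fun k _ => h1 k), sum_mask, Finset.sum_sub_distrib,
    rowsum, rowsum, Mx_c0 lam r b i hi, Mx_00]
  ring

lemma Yc0 (i : Fin n) (hi : i ≠ 0) : Ymat lam r b i 0 = 0 := by
  rw [hYe, if_neg hi, if_pos rfl]

lemma Zc0 (hn : 2 ≤ n) (i : Fin n) (hi : i ≠ 0) : Zmat lam r b i 0 = 0 := by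
  rw [hZe lam r b hn]
  by_cases h : 1 ≤ i.val ∧ i.val ≤ n - 2
  · have hsv : ((i + 1 : Fin n)).val = i.val + 1 := val_succ hn i (by omega)
    have hi' : (i + 1 : Fin n) ≠ 0 := by
      intro he
      have : ((i+1:Fin n)).val = 0 := by rw [he, Fin.val_zero]
      omega
    rw [if_pos h, Yc0 lam r b i hi, Yc0 lam r b _ hi', sub_zero]
  · rw [if_neg h, Yc0 lam r b i hi]

lemma sumZ_mid (hn : 2 ≤ n) (i : Fin n) (h : 1 ≤ i.val ∧ i.val ≤ n - 2) :
    ∑ k, Zmat lam r b i k = 0 := by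
  have h1 : ∀ k : Fin n, Zmat lam r b i k
      = Ymat lam r b i k - Ymat lam r b (i+1) k := by
    intro k; rw [hZe lam r b hn, if_pos h]
  have hsv : ((i + 1 : Fin n)).val = i.val + 1 := val_succ hn i (by omega)
  have hi : i ≠ 0 := by
    intro he; rw [he, Fin.val_zero] at h; omega
  have hi' : (i + 1 : Fin n) ≠ 0 := by
    intro he
    have : ((i+1:Fin n)).val = 0 := by rw [he, Fin.val_zero]
    omega
  rw [Finset.sum_congr rfl (fun k _ => h1 k), Finset.sum_sub_distrib,
    sumY lam r b i hi, sumY lam r b _ hi', sub_self]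

lemma sumZ_last (hn : 2 ≤ n) (i : Fin n) (h : i.val = n - 1) :
    ∑ k, Zmat lam r b i k = lam - pd b 0 - r := by
  have h1 : ∀ k : Fin n, Zmat lam r b i k = Ymat lam r b i k := by
    intro k; rw [hZe lam r b hn, if_neg (by omega)]
  have hi : i ≠ 0 := by
    intro he; rw [he, Fin.val_zero] at h; omega
  rw [Finset.sum_congr rfl (fun k _ => h1 k), sumY lam r b i hi]

-- zero entries of M3 below the diagonal (in the reindexed order)

lemma M3_c0 (hn : 2 ≤ n) (i : Fin n) (hi : i ≠ 0) : M3 lam r b i 0 = 0 := by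
  rw [hM3e lam r b hn, if_neg (by rw [Fin.val_zero]; omega), Zc0 lam r b hn i hi]

lemma M3_lastcol (hn : 2 ≤ n) (i j : Fin n) (hj : j.val = n - 1)
    (h1 : 1 ≤ i.val) (h2 : i.val ≤ n - 2) : M3 lam r b i j = 0 := by
  have hi : i ≠ 0 := by
    intro he; rw [he, Fin.val_zero] at h1; omega
  rw [hM3e lam r b hn, if_pos hj, sumZ_mid lam r b hn i ⟨h1, h2⟩,
    Zc0 lam r b hn i hi, sub_zero]

lemma M3_mid (hn : 2 ≤ n) (i j : Fin n) (h1 : 1 ≤ j.val) (h2 : j.val < i.val)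
    (h3 : i.val ≤ n - 2) : M3 lam r b i j = 0 := by
  have hsv : ((i + 1 : Fin n)).val = i.val + 1 := val_succ hn i (by omega)
  have hj0 : j ≠ 0 := by
    intro he; rw [he, Fin.val_zero] at h1; omega
  have hi0 : i ≠ 0 := by
    intro he
    have : i.val = 0 := by rw [he, Fin.val_zero]
    omega
  have hi'0 : (i + 1 : Fin n) ≠ 0 := by
    intro he
    have : ((i+1:Fin n)).val = 0 := by rw [he, Fin.val_zero]
    omega
  rw [hM3e lam r b hn, if_neg (by omega), hZe lam r b hn, if_pos ⟨by omega, h3⟩,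
    hYe, if_neg hi0, if_neg hj0, hYe, if_neg hi'0, if_neg hj0,
    Mx_lower lam r b i j (by rw [Fin.lt_def]; omega) hj0,
    Mx_lower lam r b (i+1) j (by rw [Fin.lt_def]; omega) hj0]
  ring

-- diagonal entries

lemma M3_00 (hn : 2 ≤ n) : M3 lam r b 0 0 = lam := by
  rw [hM3e lam r b hn, if_neg (by rw [Fin.val_zero]; omega),
    hZe lam r b hn, if_neg (by rw [Fin.val_zero]; omega),
    hYe, if_pos rfl, if_pos rfl]

lemma M3_dmid (hn : 2 ≤ n) (i : Fin n) (h1 : 1 ≤ i.val) (h2 : i.val ≤ n - 2) :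
    M3 lam r b i i = lam - r - pd b i := by
  have hsv : ((i + 1 : Fin n)).val = i.val + 1 := val_succ hn i (by omega)
  have hi0 : i ≠ 0 := by
    intro he; rw [he, Fin.val_zero] at h1; omega
  have hi'0 : (i + 1 : Fin n) ≠ 0 := by
    intro he
    have : ((i+1:Fin n)).val = 0 := by rw [he, Fin.val_zero]
    omega
  rw [hM3e lam r b hn, if_neg (by omega), hZe lam r b hn, if_pos ⟨h1, h2⟩,
    hYe, if_neg hi0, if_neg hi0, hYe, if_neg hi'0, if_neg hi0,
    Mx_diag lam r b i hi0,
    Mx_lower lam r b (i+1) i (by rw [Fin.lt_def]; omega) hi0]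
  ring

lemma M3_dlast (hn : 2 ≤ n) (i : Fin n) (h : i.val = n - 1) :
    M3 lam r b i i = lam - r - pd b 0 := by
  have hi : i ≠ 0 := by
    intro he; rw [he, Fin.val_zero] at h; omega
  rw [hM3e lam r b hn, if_pos h, sumZ_last lam r b hn i h, Zc0 lam r b hn i hi]
  ring

-- determinants of the elementary matrices

lemma detSmat : (Smat n).det = 1 := by
  have h : (Smat n).BlockTriangular OrderDual.toDual := by
    intro i j hij
    have hlt : i < j := hij
    have hj : j ≠ 0 := by
      intro he
      rw [he] at hlt
      exact absurd hlt (by simp [Fin.le_def, Fin.lt_def, Fin.val_zero])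
    rw [Smat]
    simp [hj, hlt.ne]
  rw [Matrix.det_of_lowerTriangular _ h]
  apply Finset.prod_eq_one
  intro i _
  simp [Smat]

lemma detS'mat : (S'mat n).det = 1 := by
  have h : (S'mat n).BlockTriangular OrderDual.toDual := by
    intro i j hij
    have hlt : i < j := hij
    have hj : j ≠ 0 := by
      intro he
      rw [he] at hlt
      exact absurd hlt (by simp [Fin.le_def, Fin.lt_def, Fin.val_zero])
    rw [S'mat]
    simp [hj, hlt.ne]
  rw [Matrix.det_of_lowerTriangular _ h]
  apply Finset.prod_eq_one
  intro i _
  simp [S'mat]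

lemma detEmat : (Emat n).det = 1 := by
  have h : (Emat n).BlockTriangular id := by
    intro i j hij
    have hlt : j < i := hij
    rw [Fin.lt_def] at hlt
    rw [Emat, if_neg (by intro he; rw [he] at hlt; omega), if_neg]
    rintro ⟨-, -, h2⟩
    omega
  rw [Matrix.det_of_upperTriangular h]
  apply Finset.prod_eq_one
  intro i _
  simp [Emat]

lemma detFmat : (Fmat n).det = 1 := by
  have h : (Fmat n).BlockTriangular id := by
    intro i j hij
    have hlt : j < i := hij
    rw [Fin.lt_def] at hlt
    have := i.isLt
    rw [Fmat, if_neg (by intro he; rw [he] at hlt; omega), if_neg]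
    rintro ⟨-, h1, h2⟩
    omega
  rw [Matrix.det_of_upperTriangular h]
  apply Finset.prod_eq_one
  intro i _
  simp [Fmat]

lemma detM3_eq (hn : 2 ≤ n) : (M3 lam r b).det = (Mx lam r b).det := by
  rw [M3, Zmat, Ymat, Matrix.det_mul, Matrix.det_mul, Matrix.det_mul,
    Matrix.det_mul, detSmat, detS'mat, detEmat, detFmat]
  ring

noncomputable def eperm (hn : 2 ≤ n) : Fin n ≃ Fin n where
  toFun k := ⟨if k.val = 0 then 0 else if k.val = 1 then n - 1 else k.val - 1,
    by have := k.isLt; split_ifs <;> omega⟩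
  invFun k := ⟨if k.val = 0 then 0 else if k.val = n - 1 then 1 else k.val + 1,
    by have := k.isLt; split_ifs <;> omega⟩
  left_inv k := by
    have := k.isLt
    ext
    simp only [Fin.val_mk]
    split_ifs <;> first | contradiction | omega
  right_inv k := by
    have := k.isLt
    ext
    simp only [Fin.val_mk]
    split_ifs <;> first | contradiction | omega

lemma eperm_val (hn : 2 ≤ n) (k : Fin n) :
    ((eperm hn k : Fin n)).val
      = if k.val = 0 then 0 else if k.val = 1 then n - 1 else k.val - 1 := by
  simp only [eperm, Equiv.coe_fn_mk]

lemma detM3 (hn : 2 ≤ n) : (M3 lam r b).det = ∏ j, M3 lam r b j j := by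
  rw [← Matrix.det_submatrix_equiv_self (eperm hn) (M3 lam r b)]
  have htri : ((M3 lam r b).submatrix (eperm hn) (eperm hn)).BlockTriangular id := by
    intro i j hij
    have hlt : j < i := hij
    rw [Fin.lt_def] at hlt
    have hi := i.isLt
    have hj := j.isLt
    simp only [Matrix.submatrix_apply]
    by_cases hj0 : j.val = 0
    · have hv : eperm hn j = 0 := by
        ext
        rw [eperm_val hn j, if_pos hj0, Fin.val_zero]
      rw [hv]
      apply M3_c0 lam r b hn
      intro he
      have := congrArg Fin.val he
      rw [eperm_val hn i, Fin.val_zero] at this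
      split_ifs at this <;> omega
    · by_cases hj1 : j.val = 1
      · apply M3_lastcol lam r b hn _ _ _ _ _
        · rw [eperm_val hn j, if_neg hj0, if_pos hj1]
        · rw [eperm_val hn i]; split_ifs <;> omega
        · rw [eperm_val hn i]; split_ifs <;> omega
      · apply M3_mid lam r b hn _ _ _ _ _
        · rw [eperm_val hn j]; split_ifs <;> omega
        · rw [eperm_val hn i, eperm_val hn j]; split_ifs <;> omega
        · rw [eperm_val hn i]; split_ifs <;> omega
  rw [Matrix.det_of_upperTriangular htri]
  have : ∀ k : Fin n, ((M3 lam r b).submatrix (eperm hn) (eperm hn)) k k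
      = M3 lam r b (eperm hn k) (eperm hn k) := fun k => rfl
  rw [Finset.prod_congr rfl (fun k _ => this k)]
  exact Equiv.prod_comp (eperm hn) (fun j => M3 lam r b j j)

lemma prod_diag (hn : 2 ≤ n) :
    ∏ j, M3 lam r b j j
      = lam * ∏ i ∈ Finset.univ.filter (fun i : Fin n => (i : ℕ) < n - 1),
          (lam - (r + pd b i)) := by
  rw [← Finset.mul_prod_erase _ _ (Finset.mem_univ (0:Fin n)), M3_00 lam r b hn]
  congr 1
  set w : Fin n := ⟨n - 1, by omega⟩ with hw
  have hwval : (w : ℕ) = n - 1 := rfl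
  have hz : ((0 : Fin n) : ℕ) = 0 := rfl
  have hw0 : w ≠ 0 := by
    intro he
    have h1 : (w : ℕ) = 0 := by rw [he, hz]
    rw [hwval] at h1
    omega
  have hwmem : w ∈ Finset.univ.erase (0:Fin n) :=
    Finset.mem_erase.2 ⟨hw0, Finset.mem_univ w⟩
  rw [← Finset.mul_prod_erase _ _ hwmem, M3_dlast lam r b hn w hwval]
  have h0mem : (0:Fin n) ∈ Finset.univ.filter (fun i : Fin n => (i : ℕ) < n - 1) := by
    simp only [Finset.mem_filter, Finset.mem_univ, true_and, hz]
    omega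
  rw [← Finset.mul_prod_erase _ _ h0mem]
  have hset : (Finset.univ.erase (0:Fin n)).erase w
      = (Finset.univ.filter (fun i : Fin n => (i : ℕ) < n - 1)).erase (0:Fin n) := by
    ext k
    have := k.isLt
    simp only [Finset.mem_erase, Finset.mem_filter, Finset.mem_univ, and_true,
      true_and, Fin.ext_iff, hz, hwval]
    omega
  have hprod : ∏ j ∈ (Finset.univ.erase (0:Fin n)).erase w, M3 lam r b j j
      = ∏ j ∈ (Finset.univ.erase (0:Fin n)).erase w, (lam - (r + pd b j)) := by
    apply Finset.prod_congr rfl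
    intro j hj
    simp only [Finset.mem_erase] at hj
    have hj0 : j.val ≠ 0 := by
      intro he; exact hj.2.1 (Fin.ext (by rw [he, Fin.val_zero]))
    have hjw : j.val ≠ n - 1 := by
      intro he; exact hj.1 (Fin.ext (by rw [he]))
    have := j.isLt
    rw [M3_dmid lam r b hn j (by omega) (by omega)]
    ring
  rw [hprod, hset]
  congr 1
  ring

end MixedStarAux

theorem mixed_star_charpoly (n : ℕ) (hn : 2 ≤ n) (ρ : ℝ) (hρ : 0 < ρ)
    (a : Fin n → Fin n → ℝ) (ha : ∀ i j : Fin n, i < j → 0 ≤ a i j)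
    (L : Matrix (Fin n) (Fin n) ℝ)
    (hL : ∀ i j : Fin n,
      L i j =
        if i = j then
          (if (i : ℕ) = 0 then ∑ k ∈ Finset.univ.filter (fun k => i < k), a i k
           else ρ + ∑ k ∈ Finset.univ.filter (fun k => i < k), a i k)
        else if (j : ℕ) = 0 then -ρ
        else if i < j then -(a i j) else 0) :
    ∀ lam : ℂ,
      (lam • (1 : Matrix (Fin n) (Fin n) ℂ) - L.map Complex.ofReal).det =
        lam * ∏ i ∈ Finset.univ.filter (fun i : Fin n => (i : ℕ) < n - 1),
          (lam - ((ρ : ℂ) +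
            ∑ k ∈ Finset.univ.filter (fun k => i < k), ((a i k : ℝ) : ℂ))) := by
  intro lam
  haveI : NeZero n := ⟨by omega⟩
  open MixedStarAux in
  have hb : ∀ (i : Fin n), pd (fun i j => ((a i j : ℝ) : ℂ)) i
      = ∑ k ∈ Finset.univ.filter (fun k => i < k), ((a i k : ℝ) : ℂ) := fun i => rfl
  have hMxeq : lam • (1 : Matrix (Fin n) (Fin n) ℂ) - L.map Complex.ofReal
      = MixedStarAux.Mx lam (ρ : ℂ) (fun i j => ((a i j : ℝ) : ℂ)) := by
    ext i j
    have hMx : MixedStarAux.Mx lam (ρ : ℂ) (fun i j => ((a i j : ℝ) : ℂ)) i j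
        = if i = j then (if i = 0 then lam - pd (fun i j => ((a i j : ℝ) : ℂ)) i
            else lam - (ρ:ℂ) - pd (fun i j => ((a i j : ℝ) : ℂ)) i)
          else if j = 0 then (ρ:ℂ) else if i < j then ((a i j : ℝ) : ℂ) else 0 := rfl
    simp only [Matrix.sub_apply, Matrix.smul_apply, Matrix.one_apply,
      Matrix.map_apply, smul_eq_mul, mul_ite, mul_one, mul_zero]
    rw [hL i j, hMx, hb i]
    have hc : ∀ k : Fin n, ((k : ℕ) = 0) ↔ (k = 0) := fun k =>
      ⟨fun h => Fin.ext (by rw [h]; rfl), fun h => by rw [h]; rfl⟩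
    simp only [hc]
    split_ifs <;> push_cast <;> ring
  rw [hMxeq, ← MixedStarAux.detM3_eq lam (ρ:ℂ) _ hn,
    MixedStarAux.detM3 lam (ρ:ℂ) _ hn,
    MixedStarAux.prod_diag lam (ρ:ℂ) _ hn]
  congr 1
end

section
/- Let n ≥ 2, ρ > 0, ā_{ij} ≥ 0 for 1 ≤ i < j ≤ n, and let L̄ be the mixed-star Laplacian (L̄_{i,1} = −ρ for i ≥ 2; L̄_{i,j} = −ā_{ij} for i < j; L̄_{1,1} = Σ_{j>1} ā_{1j}; L̄_{i,i} = ρ + Σ_{j>i} ā_{ij} for i ≥ 2; all other entries 0). Then every complex eigenvalue of L̄ is real and nonnegative — the spectrum is contained in {0} ∪ {ρ + Σ_{j>i} ā_{ij} : 1 ≤ i ≤ n−1} — and for any gains α > 0, β > 0 and any nonzero eigenvalue λ of L̄, both quadratics s² + βs + αλ and s² + βλs + αλ have all complex roots with negative real part. (This is the spectral content of the claim that on the directed-star mixed graph family, scalable second-order consensus holds for both the absolute and the relative velocity protocols with any positive gains, for networks of any size and reverse edges of any number and weight.) -/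
private lemma quad_neg_re (b c : ℝ) (hb : 0 < b) (hc : 0 < c) (s : ℂ)
    (h : s ^ 2 + (b : ℂ) * s + (c : ℂ) = 0) : s.re < 0 := by
  have hre : s.re ^ 2 - s.im ^ 2 + b * s.re + c = 0 := by
    have := congrArg Complex.re h
    simp [pow_two, Complex.mul_re, Complex.mul_im, Complex.add_re] at this
    nlinarith [this]
  have him : 2 * s.re * s.im + b * s.im = 0 := by
    have := congrArg Complex.im h
    simp [pow_two, Complex.mul_re, Complex.mul_im] at this
    nlinarith [this]
  by_contra hx
  push_neg at hx
  have h2 : s.im = 0 := by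
    have h3 : s.im * (2 * s.re + b) = 0 := by linarith [him]
    rcases mul_eq_zero.1 h3 with h | h
    · exact h
    · nlinarith
  rw [h2] at hre
  nlinarith

private lemma spec_loc (n : ℕ) (hn : 2 ≤ n) (ρ : ℝ) (hρ : 0 < ρ)
    (a : Fin n → Fin n → ℝ)
    (L : Matrix (Fin n) (Fin n) ℝ)
    (hL : ∀ i j : Fin n,
      L i j =
        if i = j then
          (if (i : ℕ) = 0 then ∑ k ∈ Finset.univ.filter (fun k => i < k), a i k
           else ρ + ∑ k ∈ Finset.univ.filter (fun k => i < k), a i k)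
        else if (j : ℕ) = 0 then -ρ
        else if i < j then -(a i j) else 0)
    (z : ℂ) (hz : z ∈ spectrum ℂ (L.map Complex.ofReal)) :
    z = 0 ∨ ∃ i : Fin n, (i : ℕ) < n - 1 ∧
      z = ((ρ + ∑ k ∈ Finset.univ.filter (fun k => i < k), a i k : ℝ) : ℂ) := by
  by_contra hcon
  push_neg at hcon
  obtain ⟨hz0, hzd⟩ := hcon
  set S : Fin n → ℝ := fun i => ∑ k ∈ Finset.univ.filter (fun k => i < k), a i k with hS
  -- get eigenvector
  rw [spectrum.mem_iff, Matrix.isUnit_iff_isUnit_det, isUnit_iff_ne_zero, not_not] at hz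
  obtain ⟨v, hv0, hv⟩ := Matrix.exists_mulVec_eq_zero_iff.2 hz
  have heig : ∀ i : Fin n, ∑ j, ((L i j : ℝ) : ℂ) * v j = z * v i := by
    intro i
    have h1 := congrFun hv i
    simp only [Matrix.mulVec, dotProduct, Matrix.sub_apply,
      Matrix.algebraMap_matrix_apply, Matrix.map_apply, Pi.zero_apply,
      sub_mul, Finset.sum_sub_distrib, ite_mul, zero_mul,
      Algebra.algebraMap_self, RingHom.id_apply] at h1
    rw [Finset.sum_ite_eq Finset.univ i (fun j => z * v j)] at h1
    simp only [Finset.mem_univ, if_true] at h1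
    rw [sub_eq_zero] at h1
    exact h1.symm
  have hi0n : (0 : ℕ) < n := by omega
  set i0 : Fin n := ⟨0, hi0n⟩ with hi0def
  -- entry values
  have hLcol0 : ∀ i : Fin n, i ≠ i0 → L i i0 = -ρ := by
    intro i hi
    rw [hL, if_neg hi, if_pos rfl]
  have hLdiag : ∀ i : Fin n, (i : ℕ) ≠ 0 → L i i = ρ + S i := by
    intro i hi
    rw [hL, if_pos rfl, if_neg hi]
  have hLdiag0 : L i0 i0 = S i0 := by rw [hL, if_pos rfl, if_pos rfl]
  have hLup : ∀ i j : Fin n, i < j → L i j = -(a i j) := by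
    intro i j hij
    have h1 : i ≠ j := ne_of_lt hij
    have h2 : (j : ℕ) ≠ 0 := by
      have := Fin.lt_def.1 hij
      omega
    rw [hL, if_neg h1, if_neg h2, if_pos hij]
  have hLzero : ∀ i j : Fin n, i ≠ j → j ≠ i0 → ¬ i < j → L i j = 0 := by
    intro i j h1 h2 h3
    have h2' : (j : ℕ) ≠ 0 := by
      intro h
      exact h2 (Fin.ext h)
    rw [hL, if_neg h1, if_neg h2', if_neg h3]
  -- row equation for i ≠ i0
  have hrow1 : ∀ i : Fin n, (i : ℕ) ≠ 0 →
      ((-ρ : ℝ) : ℂ) * v i0 + (((ρ + S i : ℝ) : ℂ) * v i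
        + ∑ k ∈ Finset.univ.filter (fun k => i < k), ((-(a i k) : ℝ) : ℂ) * v k)
        = z * v i := by
    intro i hi
    have hne : i ≠ i0 := by
      intro h
      rw [h] at hi
      exact hi rfl
    have hnotmem : i0 ∉ insert i (Finset.univ.filter (fun k => i < k)) := by
      simp only [Finset.mem_insert, Finset.mem_filter, Finset.mem_univ, true_and, not_or]
      refine ⟨hne.symm, fun h => ?_⟩
      have h' : (i : ℕ) < (0 : ℕ) := Fin.lt_def.1 h
      omega
    have hnotmem2 : i ∉ Finset.univ.filter (fun k => i < k) := by
      simp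
    have hsum : ∑ j, ((L i j : ℝ) : ℂ) * v j
        = ∑ j ∈ insert i0 (insert i (Finset.univ.filter (fun k => i < k))),
            ((L i j : ℝ) : ℂ) * v j := by
      refine (Finset.sum_subset (Finset.subset_univ _) ?_).symm
      intro x _ hx
      simp only [Finset.mem_insert, Finset.mem_filter, Finset.mem_univ, true_and] at hx
      push_neg at hx
      obtain ⟨hx0, hxi, hxlt⟩ := hx
      rw [hLzero i x (fun h => hxi h.symm) hx0 (not_lt.2 hxlt)]
      simp
    have h1 := heig i
    rw [hsum, Finset.sum_insert hnotmem, Finset.sum_insert hnotmem2,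
      hLcol0 i hne, hLdiag i hi,
      Finset.sum_congr rfl (fun k hk => by
        rw [hLup i k (Finset.mem_filter.1 hk).2])] at h1
    exact h1
  -- row equation for i0
  have hrow0 : ((S i0 : ℝ) : ℂ) * v i0
        + ∑ k ∈ Finset.univ.filter (fun k => i0 < k), ((-(a i0 k) : ℝ) : ℂ) * v k
        = z * v i0 := by
    have hnotmem : i0 ∉ Finset.univ.filter (fun k => i0 < k) := by simp
    have hsum : ∑ j, ((L i0 j : ℝ) : ℂ) * v j
        = ∑ j ∈ insert i0 (Finset.univ.filter (fun k => i0 < k)),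
            ((L i0 j : ℝ) : ℂ) * v j := by
      refine (Finset.sum_subset (Finset.subset_univ _) ?_).symm
      intro x _ hx
      simp only [Finset.mem_insert, Finset.mem_filter, Finset.mem_univ, true_and] at hx
      push_neg at hx
      obtain ⟨hx0, hxlt⟩ := hx
      rw [hLzero i0 x (fun h => hx0 h.symm) hx0 (not_lt.2 hxlt)]
      simp
    have h1 := heig i0
    rw [hsum, Finset.sum_insert hnotmem, hLdiag0,
      Finset.sum_congr rfl (fun k hk => by
        rw [hLup i0 k (Finset.mem_filter.1 hk).2])] at h1
    exact h1
  have hlastn : n - 1 < n := by omega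
  set lastI : Fin n := ⟨n - 1, hlastn⟩ with hlastdef
  set c : ℂ := v lastI with hcdef
  -- sum simplification given constancy above i
  have hsumconst : ∀ i : Fin n, (∀ j : Fin n, i < j → v j = c) →
      ∑ k ∈ Finset.univ.filter (fun k => i < k), ((-(a i k) : ℝ) : ℂ) * v k
        = -(((S i : ℝ) : ℂ)) * c := by
    intro i hconst
    rw [Finset.sum_congr rfl (fun k hk => by
      rw [hconst k (Finset.mem_filter.1 hk).2])]
    have step : ∀ x : Fin n, ((-(a i x) : ℝ) : ℂ) * c = -(((a i x : ℝ) : ℂ) * c) := by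
      intro x
      push_cast
      ring
    rw [Finset.sum_congr rfl (fun k _ => step k), Finset.sum_neg_distrib,
      ← Finset.sum_mul, hS]
    push_cast
    ring
  -- the key downward induction
  have key : ∀ m : ℕ, ∀ k : Fin n, 1 ≤ (k : ℕ) → n - 1 - m ≤ (k : ℕ) → v k = c := by
    intro m
    induction m with
    | zero =>
      intro k _ hk2
      have hk : k = lastI := by
        apply Fin.ext
        show (k : ℕ) = n - 1
        have := k.isLt
        omega
      rw [hk]
    | succ m ih =>
      intro k hk1 hk2
      by_cases hcase : n - 1 - m ≤ (k : ℕ)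
      · exact ih k hk1 hcase
      · push_neg at hcase
        have hk'lt : (k : ℕ) + 1 < n := by omega
        set k' : Fin n := ⟨(k : ℕ) + 1, hk'lt⟩ with hk'def
        have hIH : ∀ j : Fin n, k < j → v j = c := by
          intro j hj
          have hjv := Fin.lt_def.1 hj
          exact ih j (by omega) (by omega)
        have hIH' : ∀ j : Fin n, k' < j → v j = c := by
          intro j hj
          have hjv : (k : ℕ) + 1 < (j : ℕ) := Fin.lt_def.1 hj
          exact ih j (by omega) (by omega)
        have hvk' : v k' = c := hIH k' (Fin.lt_def.2 (Nat.lt_succ_self _))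
        have e1 := hrow1 k' (Nat.succ_ne_zero _)
        rw [hsumconst k' hIH', hvk'] at e1
        have e2 := hrow1 k (by omega)
        rw [hsumconst k hIH] at e2
        have hfac : (((ρ + S k : ℝ) : ℂ) - z) * (v k - c) = 0 := by
          push_cast at e1 e2 ⊢
          linear_combination e2 - e1
        have hnec : ((ρ + S k : ℝ) : ℂ) - z ≠ 0 := by
          rw [sub_ne_zero]
          exact fun h => hzd k (by omega) h.symm
        have hvc := (mul_eq_zero.1 hfac).resolve_left hnec
        exact sub_eq_zero.1 hvc
  have hconst : ∀ j : Fin n, 1 ≤ (j : ℕ) → v j = c := fun j hj => key n j hj (by omega)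
  have hi1n : (1 : ℕ) < n := by omega
  set i1 : Fin n := ⟨1, hi1n⟩ with hi1def
  have hIH1 : ∀ j : Fin n, i1 < j → v j = c := by
    intro j hj
    have hjv : (1 : ℕ) < (j : ℕ) := Fin.lt_def.1 hj
    exact hconst j (by omega)
  have e1 := hrow1 i1 (one_ne_zero)
  rw [hsumconst i1 hIH1, hconst i1 (le_refl 1)] at e1
  have hIH0 : ∀ j : Fin n, i0 < j → v j = c := by
    intro j hj
    have hjv : (0 : ℕ) < (j : ℕ) := Fin.lt_def.1 hj
    exact hconst j (by omega)
  have e0 := hrow0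
  rw [hsumconst i0 hIH0] at e0
  have hfac : z * c * (((ρ + S i0 : ℝ) : ℂ) - z) = 0 := by
    push_cast at e0 e1 ⊢
    linear_combination (z - ((S i0 : ℝ) : ℂ)) * e1 - ((ρ : ℝ) : ℂ) * e0
  have hnec : ((ρ + S i0 : ℝ) : ℂ) - z ≠ 0 := by
    rw [sub_ne_zero]
    exact fun h => hzd i0 (show (0:ℕ) < n - 1 by omega) h.symm
  have hzc := (mul_eq_zero.1 hfac).resolve_right hnec
  have hc0 : c = 0 := (mul_eq_zero.1 hzc).resolve_left hz0
  have hρc : ((ρ : ℝ) : ℂ) ≠ 0 := Complex.ofReal_ne_zero.2 (ne_of_gt hρ)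
  have hv00 : v i0 = 0 := by
    rw [hc0] at e1
    have hρv : ((ρ : ℝ) : ℂ) * v i0 = 0 := by
      push_cast at e1 ⊢
      linear_combination -e1
    exact (mul_eq_zero.1 hρv).resolve_left hρc
  apply hv0
  funext j
  by_cases hj : (j : ℕ) = 0
  · have : j = i0 := Fin.ext hj
    rw [this]
    exact hv00
  · rw [hconst j (by omega), hc0]
    rfl

theorem mixed_star_scalable (n : ℕ) (hn : 2 ≤ n) (ρ : ℝ) (hρ : 0 < ρ)
    (a : Fin n → Fin n → ℝ) (ha : ∀ i j : Fin n, i < j → 0 ≤ a i j)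
    (L : Matrix (Fin n) (Fin n) ℝ)
    (hL : ∀ i j : Fin n,
      L i j =
        if i = j then
          (if (i : ℕ) = 0 then ∑ k ∈ Finset.univ.filter (fun k => i < k), a i k
           else ρ + ∑ k ∈ Finset.univ.filter (fun k => i < k), a i k)
        else if (j : ℕ) = 0 then -ρ
        else if i < j then -(a i j) else 0) :
    (∀ z ∈ spectrum ℂ (L.map Complex.ofReal), ∃ r : ℝ, 0 ≤ r ∧ z = (r : ℂ)) ∧
    spectrum ℂ (L.map Complex.ofReal) ⊆
      insert (0 : ℂ) {z : ℂ | ∃ i : Fin n, (i : ℕ) < n - 1 ∧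
        z = (ρ : ℂ) + ∑ k ∈ Finset.univ.filter (fun k => i < k), ((a i k : ℝ) : ℂ)} ∧
    ∀ α β : ℝ, 0 < α → 0 < β →
      ∀ lam ∈ spectrum ℂ (L.map Complex.ofReal), lam ≠ 0 →
        (∀ s : ℂ, s ^ 2 + (β : ℂ) * s + (α : ℂ) * lam = 0 → s.re < 0) ∧
        (∀ s : ℂ, s ^ 2 + (β : ℂ) * lam * s + (α : ℂ) * lam = 0 → s.re < 0) := by
  have hloc := spec_loc n hn ρ hρ a L hL
  have hrpos : ∀ i : Fin n,
      0 < ρ + ∑ k ∈ Finset.univ.filter (fun k => i < k), a i k := by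
    intro i
    have hnn : 0 ≤ ∑ k ∈ Finset.univ.filter (fun k => i < k), a i k :=
      Finset.sum_nonneg fun k hk => ha i k (Finset.mem_filter.1 hk).2
    linarith
  refine ⟨?_, ?_, ?_⟩
  · intro z hzs
    rcases hloc z hzs with h | ⟨i, _, h⟩
    · exact ⟨0, le_refl 0, by simp [h]⟩
    · exact ⟨ρ + ∑ k ∈ Finset.univ.filter (fun k => i < k), a i k,
        le_of_lt (hrpos i), h⟩
  · intro z hzs
    rcases hloc z hzs with h | ⟨i, hi, h⟩
    · exact Set.mem_insert_iff.2 (Or.inl h)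
    · refine Set.mem_insert_iff.2 (Or.inr ⟨i, hi, ?_⟩)
      rw [h]
      push_cast
      ring
  · intro α β hα hβ lam hlam hlam0
    rcases hloc lam hlam with h | ⟨i, _, h⟩
    · exact absurd h hlam0
    · set r : ℝ := ρ + ∑ k ∈ Finset.univ.filter (fun k => i < k), a i k with hr
      have hrp : 0 < r := hrpos i
      constructor
      · intro s hs
        refine quad_neg_re β (α * r) hβ (mul_pos hα hrp) s ?_
        rw [h] at hs
        push_cast
        linear_combination hs
      · intro s hs
        refine quad_neg_re (β * r) (α * r) (mul_pos hβ hrp) (mul_pos hα hrp) s ?_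
        rw [h] at hs
        push_cast
        linear_combination hs
end

section
/- Let L be an n × n complex matrix and α, β complex scalars, and let A be the 2n × 2n block matrix A = [[0, I_n], [−αL, −βL]]. Then a complex number s is an eigenvalue of A if and only if there exists an eigenvalue λ of L such that s² + βλs + αλ = 0. Equivalently, det(sI_{2n} − A) = det(s²I_n + (α + βs)L). -/
open Polynomial Matrix

lemma specdet_aux {m : Type*} [Fintype m] [DecidableEq m]
    (M : Matrix m m ℂ) (s : ℂ) :
    s ∈ spectrum ℂ M ↔ (s • (1 : Matrix m m ℂ) - M).det = 0 := by
  rw [spectrum.mem_iff, Algebra.algebraMap_eq_smul_one, ← not_iff_not, not_not,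
    Matrix.isUnit_iff_isUnit_det, isUnit_iff_ne_zero]

lemma det_identity_of_invertible (n : ℕ) (L : Matrix (Fin n) (Fin n) ℂ) (α β s : ℂ)
    (h : (s • (1 : Matrix (Fin n) (Fin n) ℂ) + β • L).det ≠ 0) :
    (s • (1 : Matrix (Fin n ⊕ Fin n) (Fin n ⊕ Fin n) ℂ) -
      Matrix.fromBlocks 0 1 (-(α • L)) (-(β • L))).det =
    (s ^ 2 • (1 : Matrix (Fin n) (Fin n) ℂ) + (α + β * s) • L).det := by
  set D : Matrix (Fin n) (Fin n) ℂ := s • 1 + β • L with hD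
  haveI : Invertible D := Matrix.invertibleOfIsUnitDet D (isUnit_iff_ne_zero.mpr h)
  have hblock : s • (1 : Matrix (Fin n ⊕ Fin n) (Fin n ⊕ Fin n) ℂ) -
      Matrix.fromBlocks 0 1 (-(α • L)) (-(β • L)) =
      Matrix.fromBlocks (s • 1) (-1) (α • L) D := by
    rw [← Matrix.fromBlocks_one, Matrix.fromBlocks_smul, sub_eq_add_neg,
      Matrix.fromBlocks_neg, Matrix.fromBlocks_add]
    congr 1 <;> simp [hD]
  rw [hblock, Matrix.det_fromBlocks₂₂]
  have key : D * (s • 1 - (-1) * ⅟ D * (α • L)) =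
      s ^ 2 • (1 : Matrix (Fin n) (Fin n) ℂ) + (α + β * s) • L := by
    rw [neg_one_mul, Matrix.neg_mul, sub_neg_eq_add, Matrix.mul_add,
      ← Matrix.mul_assoc, mul_invOf_self, Matrix.one_mul]
    rw [Matrix.mul_smul, Matrix.mul_one, hD]
    have h2 : s ^ 2 = s * s := sq s
    rw [h2]
    module
  rw [← Matrix.det_mul, key]

lemma det_identity (n : ℕ) (L : Matrix (Fin n) (Fin n) ℂ) (α β : ℂ) (s : ℂ) :
    (s • (1 : Matrix (Fin n ⊕ Fin n) (Fin n ⊕ Fin n) ℂ) -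
      Matrix.fromBlocks 0 1 (-(α • L)) (-(β • L))).det =
    (s ^ 2 • (1 : Matrix (Fin n) (Fin n) ℂ) + (α + β * s) • L).det := by
  set A : Matrix (Fin n ⊕ Fin n) (Fin n ⊕ Fin n) ℂ :=
    Matrix.fromBlocks 0 1 (-(α • L)) (-(β • L)) with hA
  set p1 : ℂ[X] :=
    ((X : ℂ[X]) • (1 : Matrix (Fin n ⊕ Fin n) (Fin n ⊕ Fin n) ℂ[X]) - A.map C).det with hp1
  set p2 : ℂ[X] :=
    (((X : ℂ[X]) ^ 2) • (1 : Matrix (Fin n) (Fin n) ℂ[X]) +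
      (C α + C β * X) • L.map C).det with hp2
  set p3 : ℂ[X] :=
    ((X : ℂ[X]) • (1 : Matrix (Fin n) (Fin n) ℂ[X]) + C β • L.map C).det with hp3
  have hev1 : ∀ t : ℂ, p1.eval t = (t • (1 : Matrix (Fin n ⊕ Fin n) (Fin n ⊕ Fin n) ℂ) - A).det := by
    intro t
    rw [hp1, ← Polynomial.coe_evalRingHom, RingHom.map_det]
    congr 1
    ext i j
    simp [Matrix.map_apply, Matrix.one_apply, apply_ite]
  have hev2 : ∀ t : ℂ, p2.eval t =
      (t ^ 2 • (1 : Matrix (Fin n) (Fin n) ℂ) + (α + β * t) • L).det := by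
    intro t
    rw [hp2, ← Polynomial.coe_evalRingHom, RingHom.map_det]
    congr 1
    ext i j
    simp [Matrix.map_apply, Matrix.one_apply, apply_ite]
  have hev3 : ∀ t : ℂ, p3.eval t = (t • (1 : Matrix (Fin n) (Fin n) ℂ) + β • L).det := by
    intro t
    rw [hp3, ← Polynomial.coe_evalRingHom, RingHom.map_det]
    congr 1
    ext i j
    simp [Matrix.map_apply, Matrix.one_apply, apply_ite]
  have hp3ne : p3 ≠ 0 := by
    have hm : (X : ℂ[X]) • (1 : Matrix (Fin n) (Fin n) ℂ[X]) + C β • L.map C =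
        (-(β • L)).charmatrix := by
      ext i j
      rw [Matrix.charmatrix_apply]
      by_cases hij : i = j <;>
        simp [hij, Matrix.one_apply, Matrix.map_apply, Matrix.scalar_apply,
          Matrix.diagonal_apply, mul_comm]
    rw [hp3, hm]
    exact (Matrix.charpoly_monic (-(β • L))).ne_zero
  have hfin : {t : ℂ | p3.eval t = 0}.Finite := Polynomial.finite_setOf_isRoot hp3ne
  have hinf : {t : ℂ | p3.eval t ≠ 0}.Infinite := by
    have h1 := Set.Finite.infinite_compl hfin
    rwa [Set.compl_setOf] at h1
  have heq : p1 = p2 := by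
    apply Polynomial.eq_of_infinite_eval_eq
    apply Set.Infinite.mono _ hinf
    intro t ht
    simp only [Set.mem_setOf_eq] at ht ⊢
    rw [hev1, hev2, hA]
    exact det_identity_of_invertible n L α β t (by rw [← hev3]; exact ht)
  have hfin2 := congrArg (Polynomial.eval s) heq
  rwa [hev1, hev2] at hfin2

theorem relative_protocol_closed_loop_spectrum (n : ℕ)
    (L : Matrix (Fin n) (Fin n) ℂ) (α β : ℂ)
    (A : Matrix (Fin n ⊕ Fin n) (Fin n ⊕ Fin n) ℂ)
    (hA : A = Matrix.fromBlocks 0 1 (-(α • L)) (-(β • L))) :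
    (∀ s : ℂ, s ∈ spectrum ℂ A ↔
      ∃ lam ∈ spectrum ℂ L, s ^ 2 + β * lam * s + α * lam = 0) ∧
    (∀ s : ℂ, (s • (1 : Matrix (Fin n ⊕ Fin n) (Fin n ⊕ Fin n) ℂ) - A).det =
      (s ^ 2 • (1 : Matrix (Fin n) (Fin n) ℂ) + (α + β * s) • L).det) := by
  subst hA
  have hdet := det_identity n L α β
  refine ⟨?_, hdet⟩
  intro s
  rw [specdet_aux, hdet s]
  by_cases hc : α + β * s = 0
  · have h2 : (s ^ 2 • (1 : Matrix (Fin n) (Fin n) ℂ) + (α + β * s) • L).det = (s ^ 2) ^ n := by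
      rw [hc, zero_smul, add_zero, Matrix.det_smul, Matrix.det_one, mul_one, Fintype.card_fin]
    rw [h2]
    constructor
    · intro h
      have hs : s = 0 ∧ n ≠ 0 := by
        constructor
        · by_contra hs
          exact (pow_ne_zero n (pow_ne_zero 2 hs)) h
        · rintro rfl
          simp at h
      obtain ⟨rfl, hn⟩ := hs
      haveI : Nonempty (Fin n) := ⟨⟨0, Nat.pos_of_ne_zero hn⟩⟩
      obtain ⟨lam, hlam⟩ := spectrum.nonempty_of_isAlgClosed_of_finiteDimensional ℂ L
      refine ⟨lam, hlam, ?_⟩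
      have hα : α = 0 := by simpa using hc
      simp [hα]
    · rintro ⟨lam, hlam, hl⟩
      have hs2 : s ^ 2 = 0 := by linear_combination hl - lam * hc
      have hn : n ≠ 0 := by
        rintro rfl
        have hd := (specdet_aux L lam).mp hlam
        simp [Matrix.det_isEmpty] at hd
      rw [hs2, zero_pow hn]
  · set c := α + β * s with hcdef
    set μ := -(s ^ 2) / c with hμ
    have hfac : s ^ 2 • (1 : Matrix (Fin n) (Fin n) ℂ) + c • L =
        (-c) • (μ • (1 : Matrix (Fin n) (Fin n) ℂ) - L) := by
      rw [smul_sub, smul_smul, hμ]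
      have : -c * (-(s ^ 2) / c) = s ^ 2 := by field_simp
      rw [this]
      module
    rw [hfac, Matrix.det_smul, mul_eq_zero]
    have hcpow : (-c) ^ Fintype.card (Fin n) ≠ 0 := pow_ne_zero _ (neg_ne_zero.mpr hc)
    constructor
    · rintro (h | h)
      · exact absurd h hcpow
      · refine ⟨μ, (specdet_aux L μ).mpr h, ?_⟩
        rw [hμ, hcdef]
        have hmc : -(s ^ 2) / (α + β * s) * (α + β * s) = -(s ^ 2) := div_mul_cancel₀ _ hc
        linear_combination hmc
    · rintro ⟨lam, hlam, hl⟩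
      right
      have hlμ : lam = μ := by
        rw [hμ, hcdef]
        rw [eq_div_iff (show α + β * s ≠ 0 from hc)]
        linear_combination hl
      rw [← hlμ]
      exact (specdet_aux L lam).mp hlam
end
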